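/- arXiv:math/0208075 — 13 statements merged into one kernel-verified Lean document; each statement's English description precedes it below -/
import Mathlib

section
/- Let B be the n×n matrix over F with entries: B_{ij} = 0 if j − i > 1; B_{i,i+1} = −1/c_i for 1 ≤ i ≤ n−1; B_{11} = k_2/(k_1 c_1); B_{nn} = b_{n−1}/(c_{n−1} c_n); B_{ii} = (k_{i+1} b_{i−1} − k_{i−1} a_{i−1})/(c_{i−1} c_i) for 2 ≤ i ≤ n−1; and B_{ij} = (−1)^{i+j} d_{j−1} g_i (∏_{ν=j+1}^{i−1} k_ν f_ν) / (∏_{ν=j−1}^{i} c_ν) for i − j ≥ 1, where the product over an empty index range equals 1. Assume k_1 ≠ 0 and c_i ≠ 0 for i = 1,…,n. Then A_1 · B = I, the n×n identity matrix. -/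
/-!
Fix a column `l` of `B` and write `x t = B t l`. Row `i` of `A₁` splits `(A₁ B) i l` into a head
`∑_{t < i} k_{t+1} a_{t+1} x_t` and a tail `k_{i+1} ∑_{t ≥ i} b_{t+1} x_t`. Below the diagonal
`x_t = w_t g_{t+1} / c_{t+1}` with `w = tailForm`, and `w_{t+1} = -w_t k_{t+1} f_{t+1} / c_{t+1}`.
The formulas for `c`, `f`, `g` turn this into `b_{t+1} x_t = w_t - w_{t+1}` and
`k_{t+1} a_{t+1} x_t = k_{t+1} w_t - k_{t+2} w_{t+1}`, so both sums telescope: for `i > l` the tail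
is `w_i` and the head is `-k_{i+1} w_i`. For `i ≤ l` only `x_{l-1} = -1 / c_l`, the diagonal entry
and the tail from `l + 1` contribute, and the entry is checked directly.
-/

namespace BrownianMatrix

open Finset

variable {F : Type*} [Field F]

/- Indices are 0-based: `entry a b k t s` and `invEntry n a b k c d f g t s` are the
`(t + 1, s + 1)` entries of `A₁` and `B`. -/
def entry (a b k : ℕ → F) (t s : ℕ) : F :=
  if t ≤ s then k (t + 1) * b (s + 1) else k (s + 1) * a (s + 1)

def invEntry (n : ℕ) (a b k c d f g : ℕ → F) (t s : ℕ) : F :=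
  if s + 1 > t + 1 + 1 then 0
  else if s + 1 = t + 1 + 1 then -1 / c (t + 1)
  else if t = s then
    (if t + 1 = 1 then k 2 / (k 1 * c 1)
     else if t + 1 = n then b (n - 1) / (c (n - 1) * c n)
     else (k (t + 2) * b t - k t * a t) / (c t * c (t + 1)))
  else (-1 : F) ^ ((t + 1) + (s + 1)) * d s * g (t + 1) *
    (∏ ν ∈ Icc (s + 2) t, k ν * f ν) / ∏ ν ∈ Icc s (t + 1), c ν

def tailForm (k c d f : ℕ → F) (l m : ℕ) : F :=
  (-1) ^ (m + l) * d l * (∏ ν ∈ Icc (l + 2) m, k ν * f ν) / ∏ ν ∈ Icc l m, c ν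

structure IsInverseData (n : ℕ) (a b k c d f g : ℕ → F) : Prop where
  c_zero : c 0 = 1
  c_eq : ∀ i, 1 ≤ i → i ≤ n - 1 → c i = k (i + 1) * b i - k i * a i
  c_last : c n = b n
  d_zero : d 0 = a 1
  d_eq : ∀ i, 1 ≤ i → i ≤ n - 2 →
    d i = k (i + 1) * a (i + 1) * b i - k i * a i * b (i + 1)
  f_eq : ∀ i, 2 ≤ i → i ≤ n - 1 → f i = a i - b i
  g_eq : ∀ i, 2 ≤ i → i ≤ n - 1 → g i = k (i + 1) - k i
  g_last : g n = 1
  k_one_ne_zero : k 1 ≠ 0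
  c_ne_zero : ∀ i, 1 ≤ i → i ≤ n → c i ≠ 0

variable {n : ℕ} {a b k c d f g : ℕ → F}

section invEntry

variable {t s : ℕ}

lemma invEntry_of_add_two_le (h : t + 2 ≤ s) : invEntry n a b k c d f g t s = 0 := by
  rw [invEntry, if_pos (by omega)]

lemma invEntry_succ : invEntry n a b k c d f g t (t + 1) = -1 / c (t + 1) := by
  rw [invEntry, if_neg (by omega), if_pos rfl]

lemma invEntry_zero_zero : invEntry n a b k c d f g 0 0 = k 2 / (k 1 * c 1) := by
  simp [invEntry]

lemma invEntry_self_of_succ_eq (h₁ : 1 ≤ t) (h : t + 1 = n) :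
    invEntry n a b k c d f g t t = b t / (c t * c (t + 1)) := by
  subst h
  rw [invEntry, if_neg (by omega), if_neg (by omega), if_pos rfl, if_neg (by omega), if_pos rfl,
    Nat.add_sub_cancel]

lemma invEntry_self_of_lt (h₁ : 1 ≤ t) (h : t + 1 < n) :
    invEntry n a b k c d f g t t = (k (t + 2) * b t - k t * a t) / (c t * c (t + 1)) := by
  rw [invEntry, if_neg (by omega), if_neg (by omega), if_pos rfl, if_neg (by omega),
    if_neg (by omega)]

lemma tailForm_succ_self (l : ℕ) :
    tailForm k c d f l (l + 1) = -(d l / (c l * c (l + 1))) := by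
  rw [tailForm, Icc_eq_empty (by omega), prod_empty, prod_Icc_succ_top (by omega), Icc_self,
    prod_singleton, Odd.neg_one_pow ⟨l, by ring⟩]
  ring

lemma tailForm_succ {l m : ℕ} (h : l < m) :
    tailForm k c d f l (m + 1) =
      -(tailForm k c d f l m * (k (m + 1) * f (m + 1)) / c (m + 1)) := by
  rw [tailForm, tailForm, prod_Icc_succ_top (by omega), prod_Icc_succ_top (by omega)]
  ring

lemma invEntry_of_lt (h : s < t) :
    invEntry n a b k c d f g t s = tailForm k c d f s t * g (t + 1) / c (t + 1) := by
  rw [invEntry, if_neg (by omega), if_neg (by omega), if_neg (by omega), tailForm,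
    prod_Icc_succ_top (by omega)]
  ring

end invEntry

section step

variable {l t : ℕ}

lemma b_mul_invEntry (hlt : l < t)
    (hc : c (t + 1) = k (t + 2) * b (t + 1) - k (t + 1) * a (t + 1))
    (hc₀ : c (t + 1) ≠ 0) (hf : f (t + 1) = a (t + 1) - b (t + 1))
    (hg : g (t + 1) = k (t + 2) - k (t + 1)) :
    b (t + 1) * invEntry n a b k c d f g t l =
      tailForm k c d f l t - tailForm k c d f l (t + 1) := by
  rw [invEntry_of_lt hlt, tailForm_succ hlt, hf, hg]
  field_simp
  linear_combination -tailForm k c d f l t * hc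

lemma k_mul_a_mul_invEntry (hlt : l < t)
    (hc : c (t + 1) = k (t + 2) * b (t + 1) - k (t + 1) * a (t + 1))
    (hc₀ : c (t + 1) ≠ 0) (hf : f (t + 1) = a (t + 1) - b (t + 1))
    (hg : g (t + 1) = k (t + 2) - k (t + 1)) :
    k (t + 1) * a (t + 1) * invEntry n a b k c d f g t l =
      k (t + 1) * tailForm k c d f l t - k (t + 2) * tailForm k c d f l (t + 1) := by
  rw [invEntry_of_lt hlt, tailForm_succ hlt, hf, hg]
  field_simp
  linear_combination -k (t + 1) * tailForm k c d f l t * hc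

lemma b_mul_invEntry_of_last (hlt : l < t) (hc : c (t + 1) = b (t + 1)) (hc₀ : c (t + 1) ≠ 0)
    (hg : g (t + 1) = 1) :
    b (t + 1) * invEntry n a b k c d f g t l = tailForm k c d f l t := by
  rw [invEntry_of_lt hlt, hg, ← hc]
  field_simp

end step

section column

variable {l : ℕ}

lemma sum_mul_invEntry_eq_zero (x : ℕ → F) {s : Finset ℕ} (hs : ∀ t ∈ s, t + 2 ≤ l) :
    ∑ t ∈ s, x t * invEntry n a b k c d f g t l = 0 :=
  sum_eq_zero fun t ht => by rw [invEntry_of_add_two_le (hs t ht), mul_zero]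

lemma sum_range_entry_mul (x : ℕ → F) {i : ℕ} (hi : i ≤ n) :
    ∑ t ∈ range n, entry a b k i t * x t =
      ∑ t ∈ range i, k (t + 1) * a (t + 1) * x t +
        k (i + 1) * ∑ t ∈ Ico i n, b (t + 1) * x t := by
  rw [range_eq_Ico, ← sum_Ico_consecutive _ (Nat.zero_le i) hi, ← range_eq_Ico, mul_sum]
  congr 1 <;> refine sum_congr rfl fun t ht => ?_
  · rw [entry, if_neg (by simp only [mem_range] at ht; omega)]
  · rw [entry, if_pos (mem_Ico.mp ht).1]
    ring

namespace IsInverseData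

lemma sum_Ico_b_mul_invEntry (h : IsInverseData n a b k c d f g) {m : ℕ} (hlm : l < m)
    (hm : m < n) :
    ∑ t ∈ Ico m n, b (t + 1) * invEntry n a b k c d f g t l = tailForm k c d f l m := by
  obtain ⟨p, rfl⟩ : ∃ p, n = p + 1 := ⟨n - 1, by omega⟩
  have hstep : ∀ t ∈ Ico m p, b (t + 1) * invEntry (p + 1) a b k c d f g t l =
      -(tailForm k c d f l (t + 1) - tailForm k c d f l t) := fun t ht => by
    have := mem_Ico.mp ht
    rw [neg_sub]
    exact b_mul_invEntry (by omega) (h.c_eq _ (by omega) (by omega))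
      (h.c_ne_zero _ (by omega) (by omega)) (h.f_eq _ (by omega) (by omega))
      (h.g_eq _ (by omega) (by omega))
  rw [sum_Ico_succ_top (by omega), sum_congr rfl hstep, sum_neg_distrib,
    sum_Ico_sub (tailForm k c d f l) (by omega),
    b_mul_invEntry_of_last (by omega) h.c_last (h.c_ne_zero _ (by omega) le_rfl) h.g_last]
  ring

lemma sum_range_succ_k_mul_a_mul_invEntry (h : IsInverseData n a b k c d f g) (hl : l + 1 < n) :
    ∑ t ∈ range (l + 1), k (t + 1) * a (t + 1) * invEntry n a b k c d f g t l =
      -(k (l + 2) * tailForm k c d f l (l + 1)) := by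
  rw [tailForm_succ_self]
  rcases l with _ | e
  · have := h.c_ne_zero 1 le_rfl (by omega)
    have := h.k_one_ne_zero
    rw [sum_range_one, invEntry_zero_zero, h.d_zero, h.c_zero]
    field_simp
  · have := h.c_ne_zero (e + 1) (by omega) (by omega)
    have := h.c_ne_zero (e + 2) (by omega) (by omega)
    have hc := h.c_eq (e + 2) (by omega) (by omega)
    rw [sum_range_succ, sum_range_succ,
      sum_mul_invEntry_eq_zero _ fun t ht => by simp only [mem_range] at ht; omega,
      invEntry_succ, invEntry_self_of_lt (by omega) hl, h.d_eq (e + 1) (by omega) (by omega)]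
    field_simp
    linear_combination -k (e + 1) * a (e + 1) * hc

lemma sum_range_k_mul_a_mul_invEntry (h : IsInverseData n a b k c d f g) {m : ℕ} (hlm : l < m)
    (hm : m < n) :
    ∑ t ∈ range m, k (t + 1) * a (t + 1) * invEntry n a b k c d f g t l =
      -(k (m + 1) * tailForm k c d f l m) := by
  have hstep : ∀ t ∈ Ico (l + 1) m, k (t + 1) * a (t + 1) * invEntry n a b k c d f g t l =
      -(k (t + 1 + 1) * tailForm k c d f l (t + 1) - k (t + 1) * tailForm k c d f l t) :=
    fun t ht => by
      have := mem_Ico.mp ht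
      rw [neg_sub]
      exact k_mul_a_mul_invEntry (by omega) (h.c_eq _ (by omega) (by omega))
        (h.c_ne_zero _ (by omega) (by omega)) (h.f_eq _ (by omega) (by omega))
        (h.g_eq _ (by omega) (by omega))
  rw [range_eq_Ico, ← sum_Ico_consecutive _ (Nat.zero_le (l + 1)) hlm, ← range_eq_Ico,
    h.sum_range_succ_k_mul_a_mul_invEntry (by omega), sum_congr rfl hstep, sum_neg_distrib,
    sum_Ico_sub (fun t => k (t + 1) * tailForm k c d f l t) hlm]
  ring

lemma sum_Ico_zero_b_mul_invEntry_zero (h : IsInverseData n a b k c d f g) (hn : 2 ≤ n) :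
    ∑ t ∈ Ico 0 n, b (t + 1) * invEntry n a b k c d f g t 0 = 1 / k 1 := by
  have := h.c_ne_zero 1 le_rfl (by omega)
  have := h.k_one_ne_zero
  have hc := h.c_eq 1 le_rfl (by omega)
  rw [sum_eq_sum_Ico_succ_bot (by omega), h.sum_Ico_b_mul_invEntry (by omega) (by omega),
    tailForm_succ_self, zero_add, invEntry_zero_zero, h.d_zero, h.c_zero]
  field_simp
  linear_combination -hc

lemma sum_Ico_b_mul_invEntry_self (h : IsInverseData n a b k c d f g) (hl : 1 ≤ l)
    (hln : l < n) :
    ∑ t ∈ Ico l n, b (t + 1) * invEntry n a b k c d f g t l = b l / c l := by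
  have := h.c_ne_zero l hl hln.le
  rw [sum_eq_sum_Ico_succ_bot hln]
  rcases (by omega : l + 1 = n ∨ l + 1 < n) with hlast | hlt
  · have hb : c (l + 1) = b (l + 1) := hlast ▸ h.c_last
    have : b (l + 1) ≠ 0 := hb ▸ h.c_ne_zero (l + 1) (by omega) hlast.le
    rw [hlast, Ico_self, sum_empty, add_zero, invEntry_self_of_succ_eq hl hlast, ← hlast, hb]
    field_simp
  · have := h.c_ne_zero (l + 1) (by omega) hlt.le
    have hc := h.c_eq (l + 1) (by omega) (by omega)
    rw [h.sum_Ico_b_mul_invEntry (lt_add_one l) hlt, tailForm_succ_self,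
      invEntry_self_of_lt hl hlt, h.d_eq l hl (by omega)]
    field_simp
    linear_combination -b l * hc

lemma sum_Ico_b_mul_invEntry_of_lt (h : IsInverseData n a b k c d f g) {i : ℕ} (hil : i < l)
    (hln : l < n) :
    ∑ t ∈ Ico i n, b (t + 1) * invEntry n a b k c d f g t l = 0 := by
  obtain ⟨e, rfl⟩ : ∃ e, l = e + 1 := ⟨l - 1, by omega⟩
  have := h.c_ne_zero (e + 1) (by omega) hln.le
  rw [← sum_Ico_consecutive _ (by omega : i ≤ e) (by omega : e ≤ n),
    sum_mul_invEntry_eq_zero _ fun t ht => by simp only [mem_Ico] at ht; omega, zero_add,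
    sum_eq_sum_Ico_succ_bot (by omega), h.sum_Ico_b_mul_invEntry_self (by omega) hln,
    invEntry_succ]
  ring

theorem sum_entry_mul_invEntry (h : IsInverseData n a b k c d f g) (hn : 2 ≤ n) {i l : ℕ}
    (hi : i < n) (hl : l < n) :
    ∑ t ∈ range n, entry a b k i t * invEntry n a b k c d f g t l = if i = l then 1 else 0 := by
  rw [sum_range_entry_mul _ hi.le]
  rcases lt_trichotomy i l with hil | rfl | hil
  · rw [if_neg hil.ne,
      sum_mul_invEntry_eq_zero _ fun t ht => by simp only [mem_range] at ht; omega,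
      h.sum_Ico_b_mul_invEntry_of_lt hil hl]
    ring
  · rw [if_pos rfl]
    rcases i with _ | e
    · rw [sum_range_zero, h.sum_Ico_zero_b_mul_invEntry_zero hn, zero_add,
        mul_one_div_cancel h.k_one_ne_zero]
    · have := h.c_ne_zero (e + 1) (by omega) hi.le
      have hc := h.c_eq (e + 1) (by omega) (by omega)
      rw [sum_range_succ,
        sum_mul_invEntry_eq_zero _ fun t ht => by simp only [mem_range] at ht; omega,
        invEntry_succ, h.sum_Ico_b_mul_invEntry_self (by omega) hl]
      field_simp
      linear_combination -hc
  · rw [if_neg hil.ne', h.sum_range_k_mul_a_mul_invEntry hil hi, h.sum_Ico_b_mul_invEntry hil hi]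
    ring

end IsInverseData

end column

end BrownianMatrix

/-- With `A₁` the Brownian-type matrix `(A₁)_{ij} = kᵢbⱼ (i ≤ j)`,
`kⱼaⱼ (i > j)` (1-based), and `B` the lower Hessenberg matrix of formulae (3),
assuming `k₁ ≠ 0` and `cᵢ ≠ 0` for `i = 1,…,n`, we have `A₁ * B = 1`. -/
theorem stmt_0 {F : Type*} [Field F] {n : ℕ} (hn : 3 ≤ n)
    (a b k c d f g : ℕ → F)
    (A₁ B : Matrix (Fin n) (Fin n) F)
    (hA : ∀ i j : Fin n, A₁ i j =
      if (i : ℕ) ≤ (j : ℕ) then k ((i : ℕ) + 1) * b ((j : ℕ) + 1)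
      else k ((j : ℕ) + 1) * a ((j : ℕ) + 1))
    (hc0 : c 0 = 1)
    (hc : ∀ i : ℕ, 1 ≤ i → i ≤ n - 1 → c i = k (i + 1) * b i - k i * a i)
    (hcn : c n = b n)
    (hd0 : d 0 = a 1)
    (hd : ∀ i : ℕ, 1 ≤ i → i ≤ n - 2 →
      d i = k (i + 1) * a (i + 1) * b i - k i * a i * b (i + 1))
    (hf : ∀ i : ℕ, 2 ≤ i → i ≤ n - 1 → f i = a i - b i)
    (hg : ∀ i : ℕ, 2 ≤ i → i ≤ n - 1 → g i = k (i + 1) - k i)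
    (hgn : g n = 1)
    (hB : ∀ i j : Fin n, B i j =
      if ((j : ℕ) + 1) > ((i : ℕ) + 1) + 1 then 0
      else if ((j : ℕ) + 1) = ((i : ℕ) + 1) + 1 then -1 / c ((i : ℕ) + 1)
      else if (i : ℕ) = (j : ℕ) then
        (if (i : ℕ) + 1 = 1 then k 2 / (k 1 * c 1)
         else if (i : ℕ) + 1 = n then b (n - 1) / (c (n - 1) * c n)
         else (k ((i : ℕ) + 2) * b (i : ℕ) - k (i : ℕ) * a (i : ℕ)) /
           (c (i : ℕ) * c ((i : ℕ) + 1)))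
      else (-1 : F) ^ (((i : ℕ) + 1) + ((j : ℕ) + 1)) * d (j : ℕ) * g ((i : ℕ) + 1) *
        (∏ ν ∈ Finset.Icc ((j : ℕ) + 2) (i : ℕ), k ν * f ν) /
        ∏ ν ∈ Finset.Icc (j : ℕ) ((i : ℕ) + 1), c ν)
    (hk1 : k 1 ≠ 0)
    (hcne : ∀ i : ℕ, 1 ≤ i → i ≤ n → c i ≠ 0) :
    A₁ * B = 1 := by
  have h : BrownianMatrix.IsInverseData n a b k c d f g :=
    ⟨hc0, hc, hcn, hd0, hd, hf, hg, hgn, hk1, hcne⟩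
  ext i j
  calc (A₁ * B) i j
      = ∑ t ∈ Finset.range n, BrownianMatrix.entry a b k i t *
          BrownianMatrix.invEntry n a b k c d f g t j := by
        rw [Matrix.mul_apply, ← Fin.sum_univ_eq_sum_range
          (fun t => BrownianMatrix.entry a b k i t * BrownianMatrix.invEntry n a b k c d f g t j)]
        exact Finset.sum_congr rfl fun t _ => by rw [hA, hB]; rfl
    _ = if (i : ℕ) = j then 1 else 0 := h.sum_entry_mul_invEntry (by omega) i.isLt j.isLt
    _ = (1 : Matrix (Fin n) (Fin n) F) i j := by simp only [Matrix.one_apply, Fin.val_inj]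
end

section
/- Let B be the n×n matrix over F with entries: B_{ij} = 0 if j − i > 1; B_{i,i+1} = −1/c_i for 1 ≤ i ≤ n−1; B_{11} = k_2/(k_1 c_1); B_{nn} = b_{n−1}/(c_{n−1} c_n); B_{ii} = (k_{i+1} b_{i−1} − k_{i−1} a_{i−1})/(c_{i−1} c_i) for 2 ≤ i ≤ n−1; and B_{ij} = (−1)^{i+j} d_{j−1} g_i (∏_{ν=j+1}^{i−1} k_ν f_ν) / (∏_{ν=j−1}^{i} c_ν) for i − j ≥ 1, where the product over an empty index range equals 1. Assume k_1 ≠ 0 and c_i ≠ 0 for i = 1,…,n. Then B · A_1 = I, the n×n identity matrix. -/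
/-!
Column `j` of `A₁` has entries `k_q b_j` for `q ≤ j` and the constant `k_j a_j` for `q > j`,
so `(B A₁)_{pj}` is `b_j` times the `k`-weighted sum of the entries of row `p` of `B` up to
column `j`, plus `k_j a_j` times the plain sum of the entries after column `j`. Below the
diagonal these two partial sums are `-k_m a_m L_{pm}` and `b_m L_{pm}` for one coefficient
`L_{pm}` (`lowerCoeff`, with `m = j + 1`), so the entry vanishes. Both closed forms follow by
induction along the row, each step being one of the polynomial identities
`k_{m+1} d_m - k_m a_m k_{m+1} f_{m+1} = k_{m+1} a_{m+1} c_m` and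
`d_m - b_{m+1} c_m = b_m k_{m+1} f_{m+1}`. On and above the diagonal only the diagonal and
superdiagonal entries of the row are left to account for.
-/

open Finset

section

variable {F : Type*} [Field F]

lemma prod_Icc_eq_mul_prod_Icc_add_one {M : Type*} [CommMonoid M] (u : ℕ → M) {x y : ℕ}
    (h : x ≤ y) : ∏ ν ∈ Icc x y, u ν = u x * ∏ ν ∈ Icc (x + 1) y, u ν := by
  rw [Icc_add_one_left_eq_Ioc, mul_prod_Ioc_eq_prod_Icc h]

lemma sum_mul_brownian_col (a b k x : ℕ → F) {n j : ℕ} (hj : j < n) :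
    ∑ q ∈ range n, x q * (if q ≤ j then k (q + 1) * b (j + 1) else k (j + 1) * a (j + 1)) =
      b (j + 1) * ∑ q ∈ range (j + 1), k (q + 1) * x q +
        k (j + 1) * a (j + 1) * ∑ q ∈ Ico (j + 1) n, x q := by
  rw [← sum_range_add_sum_Ico _ hj, mul_sum, mul_sum]
  congr 1
  · refine sum_congr rfl fun q hq => ?_
    rw [if_pos (by simpa [Nat.lt_succ_iff] using hq)]
    ring
  · refine sum_congr rfl fun q hq => ?_
    rw [if_neg (by simp at hq; omega)]
    ring

/-- `invEntry n a b k c d f g i j` is the entry `B_{i+1, j+1}` of the paper. -/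
def invEntry (n : ℕ) (a b k c d f g : ℕ → F) (i j : ℕ) : F :=
  if (j + 1) > (i + 1) + 1 then 0
  else if (j + 1) = (i + 1) + 1 then -1 / c (i + 1)
  else if i = j then
    (if i + 1 = 1 then k 2 / (k 1 * c 1)
     else if i + 1 = n then b (n - 1) / (c (n - 1) * c n)
     else (k (i + 2) * b i - k i * a i) / (c i * c (i + 1)))
  else (-1 : F) ^ ((i + 1) + (j + 1)) * d j * g (i + 1) *
    (∏ ν ∈ Icc (j + 2) i, k ν * f ν) / ∏ ν ∈ Icc j (i + 1), c ν

/-- The coefficient `L_{pm}` of the proof, with `p` a 0-based row index and `m` a 1-based column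
index. -/
def lowerCoeff (k c f g : ℕ → F) (p m : ℕ) : F :=
  (-1 : F) ^ (p + m) * g (p + 1) * (∏ ν ∈ Icc (m + 1) p, k ν * f ν) /
    ∏ ν ∈ Icc m (p + 1), c ν

structure BrownianData (n : ℕ) (a b k c d f g : ℕ → F) : Prop where
  two_le : 2 ≤ n
  c_zero : c 0 = 1
  c_eq : ∀ i : ℕ, 1 ≤ i → i ≤ n - 1 → c i = k (i + 1) * b i - k i * a i
  c_last : c n = b n
  d_zero : d 0 = a 1
  d_eq : ∀ i : ℕ, 1 ≤ i → i ≤ n - 2 →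
    d i = k (i + 1) * a (i + 1) * b i - k i * a i * b (i + 1)
  f_eq : ∀ i : ℕ, 2 ≤ i → i ≤ n - 1 → f i = a i - b i
  g_eq : ∀ i : ℕ, 2 ≤ i → i ≤ n - 1 → g i = k (i + 1) - k i
  g_last : g n = 1
  k_one_ne_zero : k 1 ≠ 0
  c_ne_zero : ∀ i : ℕ, 1 ≤ i → i ≤ n → c i ≠ 0

section Entries

variable {n : ℕ} {a b k c d f g : ℕ → F}

lemma invEntry_of_add_two_le {p q : ℕ} (h : p + 2 ≤ q) : invEntry n a b k c d f g p q = 0 := by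
  rw [invEntry, if_pos (by omega)]

lemma invEntry_add_one (p : ℕ) : invEntry n a b k c d f g p (p + 1) = -1 / c (p + 1) := by
  rw [invEntry, if_neg (by omega), if_pos rfl]

lemma invEntry_zero_zero : invEntry n a b k c d f g 0 0 = k 2 / (k 1 * c 1) := by
  simp [invEntry]

lemma invEntry_self_of_lt {p : ℕ} (hp : 1 ≤ p) (hpn : p + 1 < n) :
    invEntry n a b k c d f g p p = (k (p + 2) * b p - k p * a p) / (c p * c (p + 1)) := by
  rw [invEntry, if_neg (by omega), if_neg (by omega), if_pos rfl, if_neg (by omega),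
    if_neg (by omega)]

lemma invEntry_self_of_eq {p : ℕ} (hp : 1 ≤ p) (hpn : p + 1 = n) :
    invEntry n a b k c d f g p p = b (n - 1) / (c (n - 1) * c n) := by
  rw [invEntry, if_neg (by omega), if_neg (by omega), if_pos rfl, if_neg (by omega), if_pos hpn]

lemma invEntry_of_lt {p m : ℕ} (h : m < p) :
    invEntry n a b k c d f g p m = -(d m * lowerCoeff k c f g p (m + 1)) / c m := by
  rw [invEntry, if_neg (by omega), if_neg (by omega), if_neg (by omega), lowerCoeff,
    prod_Icc_eq_mul_prod_Icc_add_one c (by omega : m ≤ p + 1),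
    show p + 1 + (m + 1) = p + (m + 1) + 1 by ring, show m + 1 + 1 = m + 2 by ring]
  ring

lemma lowerCoeff_of_lt {p m : ℕ} (h : m < p) :
    lowerCoeff k c f g p m = -(k (m + 1) * f (m + 1) * lowerCoeff k c f g p (m + 1)) / c m := by
  rw [lowerCoeff, lowerCoeff, prod_Icc_eq_mul_prod_Icc_add_one c (by omega : m ≤ p + 1),
    prod_Icc_eq_mul_prod_Icc_add_one (fun ν => k ν * f ν) (by omega : m + 1 ≤ p),
    show p + (m + 1) = p + m + 1 by ring]
  ring

lemma lowerCoeff_self (p : ℕ) : lowerCoeff k c f g p p = g (p + 1) / (c p * c (p + 1)) := by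
  rw [lowerCoeff, Icc_eq_empty (by omega), prod_empty,
    prod_Icc_eq_mul_prod_Icc_add_one c (Nat.le_succ p), Icc_self, prod_singleton,
    Even.neg_one_pow ⟨p, rfl⟩]
  ring

lemma sum_Ico_invEntry_of_add_two_le {p m : ℕ} (h : p + 2 ≤ m) :
    ∑ q ∈ Ico m n, invEntry n a b k c d f g p q = 0 :=
  sum_eq_zero fun q hq => invEntry_of_add_two_le (by simp at hq; omega)

lemma sum_Ico_add_one_invEntry {p : ℕ} (hpn : p + 1 < n) :
    ∑ q ∈ Ico (p + 1) n, invEntry n a b k c d f g p q = -1 / c (p + 1) := by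
  rw [sum_eq_sum_Ico_succ_bot hpn, invEntry_add_one, sum_Ico_invEntry_of_add_two_le le_rfl,
    add_zero]

end Entries

namespace BrownianData

variable {n : ℕ} {a b k c d f g : ℕ → F} (h : BrownianData n a b k c d f g)
include h

lemma prefix_step_identity {m : ℕ} (hm : 1 ≤ m) (hmn : m + 2 ≤ n) :
    k (m + 1) * d m - k m * a m * (k (m + 1) * f (m + 1)) = k (m + 1) * a (m + 1) * c m := by
  rw [h.d_eq m hm (by omega), h.f_eq (m + 1) (by omega) (by omega), h.c_eq m hm (by omega)]
  ring

lemma suffix_step_identity {m : ℕ} (hm : 1 ≤ m) (hmn : m + 2 ≤ n) :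
    d m - b (m + 1) * c m = b m * (k (m + 1) * f (m + 1)) := by
  rw [h.d_eq m hm (by omega), h.f_eq (m + 1) (by omega) (by omega), h.c_eq m hm (by omega)]
  ring

lemma sum_range_mul_invEntry_of_le {p m : ℕ} (hm : 1 ≤ m) (hmp : m ≤ p) (hpn : p < n) :
    ∑ q ∈ range m, k (q + 1) * invEntry n a b k c d f g p q =
      -(k m * a m * lowerCoeff k c f g p m) := by
  induction m, hm using Nat.le_induction with
  | base =>
    rw [sum_range_one, invEntry_of_lt (by omega), h.d_zero, h.c_zero]
    ring
  | succ m hm ih =>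
    have hcm : c m ≠ 0 := h.c_ne_zero m hm (by omega)
    rw [sum_range_succ, ih (by omega), invEntry_of_lt (by omega), lowerCoeff_of_lt (by omega)]
    field_simp
    linear_combination -lowerCoeff k c f g p (m + 1) * h.prefix_step_identity hm (by omega)

lemma sum_Ico_self_invEntry {p : ℕ} (hp : 1 ≤ p) (hpn : p < n) :
    ∑ q ∈ Ico p n, invEntry n a b k c d f g p q = b p * lowerCoeff k c f g p p := by
  rw [sum_eq_sum_Ico_succ_bot hpn, lowerCoeff_self]
  rcases (show p + 1 < n ∨ p + 1 = n by omega) with hlt | hlast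
  · have hcp : c p ≠ 0 := h.c_ne_zero p hp hpn.le
    have hcp' : c (p + 1) ≠ 0 := h.c_ne_zero (p + 1) (by omega) hpn
    rw [invEntry_self_of_lt hp hlt, sum_Ico_add_one_invEntry hlt,
      h.g_eq (p + 1) (by omega) (by omega)]
    field_simp
    rw [h.c_eq p hp (by omega)]
    ring
  · rw [invEntry_self_of_eq hp hlast, hlast, Ico_self, sum_empty, h.g_last,
      show n - 1 = p by omega]
    ring

lemma sum_Ico_invEntry_of_le {p m : ℕ} (hm : 1 ≤ m) (hmp : m ≤ p) (hpn : p < n) :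
    ∑ q ∈ Ico m n, invEntry n a b k c d f g p q = b m * lowerCoeff k c f g p m := by
  induction hmp using Nat.decreasingInduction with
  | self => exact h.sum_Ico_self_invEntry hm hpn
  | of_succ m hmp ih =>
    have hcm : c m ≠ 0 := h.c_ne_zero m hm (by omega)
    rw [sum_eq_sum_Ico_succ_bot (by omega), ih (by omega), invEntry_of_lt hmp,
      lowerCoeff_of_lt hmp]
    field_simp
    linear_combination -lowerCoeff k c f g p (m + 1) * h.suffix_step_identity hm (by omega)

lemma sum_range_mul_invEntry_of_lt {p : ℕ} (hpn : p + 1 < n) :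
    ∑ q ∈ range (p + 1), k (q + 1) * invEntry n a b k c d f g p q = k (p + 2) / c (p + 1) := by
  have hcp' : c (p + 1) ≠ 0 := h.c_ne_zero (p + 1) (by omega) (by omega)
  rcases Nat.eq_zero_or_pos p with rfl | hp
  · rw [sum_range_one, invEntry_zero_zero]
    field_simp [h.k_one_ne_zero]
  · have hcp : c p ≠ 0 := h.c_ne_zero p hp (by omega)
    rw [sum_range_succ, h.sum_range_mul_invEntry_of_le hp le_rfl (by omega), lowerCoeff_self,
      invEntry_self_of_lt hp hpn, h.g_eq (p + 1) (by omega) (by omega)]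
    field_simp
    rw [h.c_eq p hp (by omega)]
    ring

lemma sum_range_mul_invEntry_of_eq {p : ℕ} (hpn : p + 1 = n) :
    ∑ q ∈ range (p + 1), k (q + 1) * invEntry n a b k c d f g p q = 1 / c (p + 1) := by
  have hp : 1 ≤ p := by have := h.two_le; omega
  have hcp : c p ≠ 0 := h.c_ne_zero p hp (by omega)
  have hcp' : c (p + 1) ≠ 0 := h.c_ne_zero (p + 1) (by omega) (by omega)
  have hg : g (p + 1) = 1 := hpn ▸ h.g_last
  rw [sum_range_succ, h.sum_range_mul_invEntry_of_le hp le_rfl (by omega), lowerCoeff_self,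
    invEntry_self_of_eq hp hpn, ← hpn, hg, Nat.add_sub_cancel]
  field_simp
  rw [h.c_eq p hp (by omega)]
  ring

lemma sum_range_mul_invEntry_of_add_two_le {p m : ℕ} (hpm : p + 2 ≤ m) (hmn : m ≤ n) :
    ∑ q ∈ range m, k (q + 1) * invEntry n a b k c d f g p q = 0 := by
  rw [← sum_range_add_sum_Ico _ hpm, sum_range_succ, h.sum_range_mul_invEntry_of_lt (by omega),
    invEntry_add_one, sum_eq_zero fun q hq => by rw [invEntry_of_add_two_le (by simp at hq; omega),
      mul_zero]]
  ring

lemma sum_invEntry_mul_brownian_col {p j : ℕ} (hpn : p < n) (hjn : j < n) :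
    ∑ q ∈ range n, invEntry n a b k c d f g p q *
        (if q ≤ j then k (q + 1) * b (j + 1) else k (j + 1) * a (j + 1)) =
      if p = j then 1 else 0 := by
  rw [sum_mul_brownian_col a b k _ hjn]
  rcases lt_trichotomy j p with hjp | rfl | hpj
  · rw [if_neg (by omega), h.sum_range_mul_invEntry_of_le (by omega) hjp hpn,
      h.sum_Ico_invEntry_of_le (by omega) hjp hpn]
    ring
  · have hcj : c (j + 1) ≠ 0 := h.c_ne_zero (j + 1) (by omega) (by omega)
    rw [if_pos rfl]
    rcases (show j + 1 < n ∨ j + 1 = n by omega) with hlt | hlast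
    · rw [h.sum_range_mul_invEntry_of_lt hlt, sum_Ico_add_one_invEntry hlt]
      field_simp
      rw [h.c_eq (j + 1) (by omega) (by omega)]
      ring
    · rw [h.sum_range_mul_invEntry_of_eq hlast, hlast, Ico_self, sum_empty, ← h.c_last]
      rw [hlast] at hcj
      simp [hcj]
  · rw [if_neg (by omega), h.sum_range_mul_invEntry_of_add_two_le (by omega) hjn,
      sum_Ico_invEntry_of_add_two_le (by omega)]
    ring

end BrownianData

end

/-- With `A₁` the Brownian-type matrix `(A₁)_{ij} = kᵢbⱼ (i ≤ j)`,
`kⱼaⱼ (i > j)` (1-based), and `B` the lower Hessenberg matrix of formulae (3),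
assuming `k₁ ≠ 0` and `cᵢ ≠ 0` for `i = 1,…,n`, we have `B * A₁ = 1`. -/
theorem stmt_1 {F : Type*} [Field F] {n : ℕ} (hn : 3 ≤ n)
    (a b k c d f g : ℕ → F)
    (A₁ B : Matrix (Fin n) (Fin n) F)
    (hA : ∀ i j : Fin n, A₁ i j =
      if (i : ℕ) ≤ (j : ℕ) then k ((i : ℕ) + 1) * b ((j : ℕ) + 1)
      else k ((j : ℕ) + 1) * a ((j : ℕ) + 1))
    (hc0 : c 0 = 1)
    (hc : ∀ i : ℕ, 1 ≤ i → i ≤ n - 1 → c i = k (i + 1) * b i - k i * a i)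
    (hcn : c n = b n)
    (hd0 : d 0 = a 1)
    (hd : ∀ i : ℕ, 1 ≤ i → i ≤ n - 2 →
      d i = k (i + 1) * a (i + 1) * b i - k i * a i * b (i + 1))
    (hf : ∀ i : ℕ, 2 ≤ i → i ≤ n - 1 → f i = a i - b i)
    (hg : ∀ i : ℕ, 2 ≤ i → i ≤ n - 1 → g i = k (i + 1) - k i)
    (hgn : g n = 1)
    (hB : ∀ i j : Fin n, B i j =
      if ((j : ℕ) + 1) > ((i : ℕ) + 1) + 1 then 0
      else if ((j : ℕ) + 1) = ((i : ℕ) + 1) + 1 then -1 / c ((i : ℕ) + 1)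
      else if (i : ℕ) = (j : ℕ) then
        (if (i : ℕ) + 1 = 1 then k 2 / (k 1 * c 1)
         else if (i : ℕ) + 1 = n then b (n - 1) / (c (n - 1) * c n)
         else (k ((i : ℕ) + 2) * b (i : ℕ) - k (i : ℕ) * a (i : ℕ)) /
           (c (i : ℕ) * c ((i : ℕ) + 1)))
      else (-1 : F) ^ (((i : ℕ) + 1) + ((j : ℕ) + 1)) * d (j : ℕ) * g ((i : ℕ) + 1) *
        (∏ ν ∈ Finset.Icc ((j : ℕ) + 2) (i : ℕ), k ν * f ν) /
        ∏ ν ∈ Finset.Icc (j : ℕ) ((i : ℕ) + 1), c ν)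
    (hk1 : k 1 ≠ 0)
    (hcne : ∀ i : ℕ, 1 ≤ i → i ≤ n → c i ≠ 0) :
    B * A₁ = 1 := by
  have h : BrownianData n a b k c d f g :=
    ⟨by omega, hc0, hc, hcn, hd0, hd, hf, hg, hgn, hk1, hcne⟩
  ext i j
  have hrow : ∀ l : Fin n, B i l * A₁ l j = invEntry n a b k c d f g i l *
      (if (l : ℕ) ≤ j then k (l + 1) * b (j + 1) else k (j + 1) * a (j + 1)) := fun l => by
    rw [hB, hA]
    rfl
  rw [Matrix.mul_apply, Fintype.sum_congr _ _ hrow,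
    Fin.sum_univ_eq_sum_range (fun q => invEntry n a b k c d f g i q *
      (if q ≤ j then k (q + 1) * b (j + 1) else k (j + 1) * a (j + 1))),
    h.sum_invEntry_mul_brownian_col i.isLt j.isLt, Matrix.one_apply]
  simp only [Fin.ext_iff]
end

section
/- The matrix A_1 is invertible if and only if k_1 ≠ 0, b_n ≠ 0, and k_{i+1} b_i − k_i a_i ≠ 0 for every i with 1 ≤ i ≤ n−1. -/
/-!
With `q j = k_j a_j`, `A₁` has entries `k_i b_j` on and above the diagonal and `q_j` below it,
and its determinant is `k_1 b_n ∏_{i<n} (k_{i+1} b_i - q_i)`. After factoring `k_1` out of the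
first row, subtracting `k_2` times it from the second row leaves the single entry `q_1 - k_2 b_1`
in that row; expanding along it gives a matrix of the same shape, one size smaller, with first
row `(b_2, …, b_n)`, so the formula follows by induction on `n`.
-/

open Matrix Finset

section SemisepMatrix

variable {R : Type*} [CommRing R]

def semisepMatrix (n : ℕ) (k b q : ℕ → R) : Matrix (Fin n) (Fin n) R :=
  Matrix.of fun i j => if i ≤ j then k i * b j else q j

theorem det_semisepMatrix_eq_mul_det_update (n : ℕ) (k b q : ℕ → R) :
    (semisepMatrix (n + 1) k b q).det =
      k 0 * (semisepMatrix (n + 1) (Function.update k 0 1) b q).det := by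
  set B := semisepMatrix (n + 1) (Function.update k 0 1) b q
  have hrow : semisepMatrix (n + 1) k b q = updateRow B 0 (k 0 • B 0) := by
    ext i j
    rcases Fin.eq_zero_or_eq_succ i with rfl | ⟨i, rfl⟩
    · simp [B, semisepMatrix]
    · simp [B, semisepMatrix, Fin.succ_ne_zero]
  rw [hrow, det_updateRow_smul, updateRow_eq_self]

theorem det_semisepMatrix_add_two_of_eq_one (n : ℕ) (k b q : ℕ → R) (hk : k 0 = 1) :
    (semisepMatrix (n + 2) k b q).det = (k 1 * b 0 - q 0) *
      (semisepMatrix (n + 1) (fun i => if i = 0 then 1 else k (i + 1)) (fun j => b (j + 1))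
        (fun j => q (j + 1))).det := by
  set A := semisepMatrix (n + 2) k b q
  have hsub : A 1 + (-k 1) • A 0 = Pi.single 0 (q 0 - k 1 * b 0) := by
    ext j
    rcases Fin.eq_zero_or_eq_succ j with rfl | ⟨j, rfl⟩
    · simp [A, semisepMatrix, hk, sub_eq_add_neg]
    · have hj : (1 : Fin (n + 2)) ≤ j.succ := Fin.succ_le_succ_iff.mpr (Fin.zero_le j)
      simp [A, semisepMatrix, hk, Fin.succ_ne_zero, hj]
  have hminor : (A.updateRow 1 (Pi.single 0 (q 0 - k 1 * b 0))).submatrix (Fin.succAbove 1)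
      (Fin.succAbove 0) = semisepMatrix (n + 1) (fun i => if i = 0 then 1 else k (i + 1))
        (fun j => b (j + 1)) (fun j => q (j + 1)) := by
    ext i j
    rcases Fin.eq_zero_or_eq_succ i with rfl | ⟨i, rfl⟩
    · simp [A, semisepMatrix, hk]
    · have hi : i.succ.succ ≠ 1 := by
        rw [← Fin.succ_zero_eq_one, Ne, Fin.succ_inj]
        exact Fin.succ_ne_zero i
      simp [A, semisepMatrix, Fin.succAbove, updateRow_ne hi]
  rw [← det_updateRow_add_smul_self A (i := 1) (j := 0) one_ne_zero (-k 1), hsub,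
    det_succ_row _ 1, Fin.sum_univ_succ, Finset.sum_eq_zero, hminor]
  · simp
  · intro j _
    simp [Fin.succ_ne_zero]

theorem det_semisepMatrix (n : ℕ) (k b q : ℕ → R) :
    (semisepMatrix (n + 1) k b q).det = k 0 * b n * ∏ i ∈ range n, (k (i + 1) * b i - q i) := by
  induction n generalizing k b q with
  | zero => simp [semisepMatrix]
  | succ n ih =>
    rw [det_semisepMatrix_eq_mul_det_update, det_semisepMatrix_add_two_of_eq_one _ _ _ _ (by simp),
      ih, prod_range_succ' _ n]
    simp only [ne_eq, one_ne_zero, not_false_eq_true, Function.update_of_ne, ↓reduceIte, one_mul,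
      Nat.add_eq_zero_iff, and_false, and_self, zero_add]
    ring

end SemisepMatrix

/-- `A₁` is invertible iff `k₁ ≠ 0`, `bₙ ≠ 0`, and
`k_{i+1} bᵢ - kᵢ aᵢ ≠ 0` for `1 ≤ i ≤ n-1`. -/
theorem stmt_3 {F : Type*} [Field F] {n : ℕ} (hn : 2 ≤ n)
    (a b k : ℕ → F)
    (A₁ : Matrix (Fin n) (Fin n) F)
    (hA : ∀ i j : Fin n, A₁ i j =
      if (i : ℕ) ≤ (j : ℕ) then k ((i : ℕ) + 1) * b ((j : ℕ) + 1)
      else k ((j : ℕ) + 1) * a ((j : ℕ) + 1)) :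
    IsUnit A₁ ↔
      (k 1 ≠ 0 ∧ b n ≠ 0 ∧ ∀ i : ℕ, 1 ≤ i → i ≤ n - 1 → k (i + 1) * b i - k i * a i ≠ 0) := by
  obtain ⟨m, rfl⟩ : ∃ m, n = m + 1 := ⟨n - 1, by omega⟩
  have hA₁ : A₁ = semisepMatrix (m + 1) (fun i => k (i + 1)) (fun j => b (j + 1))
      (fun j => k (j + 1) * a (j + 1)) := by
    ext i j
    simp [hA, semisepMatrix]
  rw [isUnit_iff_isUnit_det, isUnit_iff_ne_zero, hA₁, det_semisepMatrix, mul_ne_zero_iff,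
    mul_ne_zero_iff, prod_ne_zero_iff, Nat.add_sub_cancel]
  refine and_assoc.trans (and_congr_right fun _ => and_congr_right fun _ => ⟨?_, ?_⟩)
  · intro h i hi1 him
    obtain ⟨i, rfl⟩ : ∃ j, i = j + 1 := ⟨i - 1, by omega⟩
    exact h i (mem_range.mpr (by omega))
  · intro h i hi
    exact h (i + 1) (by omega) (mem_range.mp hi)
end

section
/- Assume k_1 ≠ 0, b_n ≠ 0, and k_{i+1} b_i − k_i a_i ≠ 0 for 1 ≤ i ≤ n−1, so that A_1 is invertible. Then the inverse A_1^{−1} is a lower Hessenberg matrix: (A_1^{−1})_{ij} = 0 whenever j − i > 1. -/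
/-!
Let `x` be the `j`-th column of `A₁⁻¹`, so `(A₁ x)_q = 0` for every row `q < j`. Rows `q` and
`q + 1` of `A₁` differ only by the factor `k` in front of the tail `∑_{c ≥ q+1} b_{c+1} x_c` and
in the entry of column `q`. Row `0` forces `∑_c b_{c+1} x_c = 0` since `k₁ ≠ 0`; inductively,
once `x_c = 0` for `c < p` and `∑_{c ≥ p} b_{c+1} x_c = 0`, row `p + 1` reduces to
`(k_{p+1} a_{p+1} - k_{p+2} b_{p+1}) x_p = 0`, whence `x_p = 0`.
-/

open Finset

namespace LowerHessenbergInverse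

variable {F : Type*} [Field F] (a b k : ℕ → F)

/-- Entry `(q, c)` of `A₁`, with rows and columns indexed from `0`. -/
def entry (q c : ℕ) : F :=
  if q ≤ c then k (q + 1) * b (c + 1) else k (c + 1) * a (c + 1)

lemma sum_entry_mul_eq {N q : ℕ} (hq : q ≤ N) (y : ℕ → F) :
    ∑ c ∈ range N, entry a b k q c * y c =
      k (q + 1) * ∑ c ∈ Ico q N, b (c + 1) * y c +
        ∑ c ∈ range q, k (c + 1) * a (c + 1) * y c := by
  rw [← sum_range_add_sum_Ico _ hq, add_comm, mul_sum]
  congr 1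
  · refine sum_congr rfl fun c hc => ?_
    rw [entry, if_pos (mem_Ico.mp hc).1, mul_assoc]
  · refine sum_congr rfl fun c hc => ?_
    rw [entry, if_neg (by simpa using hc)]

variable {a b k}

lemma eq_zero_and_tail_eq_zero {N m : ℕ} (hm : m ≤ N) {y : ℕ → F}
    (hrow : ∀ q < m, ∑ c ∈ range N, entry a b k q c * y c = 0)
    (hk1 : k 1 ≠ 0) (hc : ∀ i, 1 ≤ i → i < m → k (i + 1) * b i - k i * a i ≠ 0) :
    ∀ p < m, (∀ c < p, y c = 0) ∧ ∑ c ∈ Ico p N, b (c + 1) * y c = 0 := by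
  intro p
  induction p with
  | zero =>
    intro h0
    have hrow0 := hrow 0 h0
    rw [sum_entry_mul_eq a b k (Nat.zero_le N), sum_range_zero, add_zero] at hrow0
    exact ⟨fun c hc => absurd hc (Nat.not_lt_zero c),
      (mul_eq_zero.mp hrow0).resolve_left hk1⟩
  | succ p ih =>
    intro hp
    obtain ⟨hlow, htail⟩ := ih (by omega)
    have hsplit : ∑ c ∈ Ico p N, b (c + 1) * y c =
        b (p + 1) * y p + ∑ c ∈ Ico (p + 1) N, b (c + 1) * y c :=
      sum_eq_sum_Ico_succ_bot (by omega) _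
    have hlower : ∑ c ∈ range p, k (c + 1) * a (c + 1) * y c = 0 :=
      sum_eq_zero fun c hc => by rw [hlow c (mem_range.mp hc), mul_zero]
    have hrowp := hrow (p + 1) hp
    rw [sum_entry_mul_eq a b k (by omega), sum_range_succ, hlower, zero_add] at hrowp
    have hyp : (k (p + 1 + 1) * b (p + 1) - k (p + 1) * a (p + 1)) * y p = 0 := by
      linear_combination k (p + 1 + 1) * htail - hrowp - k (p + 1 + 1) * hsplit
    have hy : y p = 0 := (mul_eq_zero.mp hyp).resolve_left (hc (p + 1) (by omega) hp)
    refine ⟨fun c hc => ?_, ?_⟩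
    · rcases Nat.lt_succ_iff_lt_or_eq.mp hc with hc | rfl
      · exact hlow c hc
      · exact hy
    · rw [← htail, hsplit, hy, mul_zero, zero_add]

end LowerHessenbergInverse

open LowerHessenbergInverse in
theorem stmt_4_general {F : Type*} [Field F] {n : ℕ}
    (a b k : ℕ → F)
    (A₁ : Matrix (Fin n) (Fin n) F)
    (hA : ∀ i j : Fin n, A₁ i j =
      if (i : ℕ) ≤ (j : ℕ) then k ((i : ℕ) + 1) * b ((j : ℕ) + 1)
      else k ((j : ℕ) + 1) * a ((j : ℕ) + 1))
    (hk1 : k 1 ≠ 0)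
    (hc : ∀ i : ℕ, 1 ≤ i → i ≤ n - 1 → k (i + 1) * b i - k i * a i ≠ 0) :
    ∀ i j : Fin n, (j : ℕ) > (i : ℕ) + 1 → A₁⁻¹ i j = 0 := by
  intro i j hij
  by_cases hdet : IsUnit A₁.det
  swap
  · simp [Matrix.nonsing_inv_apply_not_isUnit A₁ hdet]
  set y : ℕ → F := fun c => if h : c < n then A₁⁻¹ ⟨c, h⟩ j else 0 with hy
  have hrow : ∀ q < (j : ℕ), ∑ c ∈ range n, entry a b k q c * y c = 0 := by
    intro q hq
    have hqj := congr_fun₂ (Matrix.mul_nonsing_inv A₁ hdet) ⟨q, by omega⟩ j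
    rw [Matrix.mul_apply, Matrix.one_apply_ne (Fin.ne_of_val_ne hq.ne)] at hqj
    rw [← hqj, ← Fin.sum_univ_eq_sum_range]
    simp [hA, hy, entry]
  have hvanish := eq_zero_and_tail_eq_zero j.isLt.le hrow hk1
    (fun i hi hij => hc i hi (by omega)) (i + 1) hij
  simpa [hy] using hvanish.1 i (Nat.lt_succ_self i)

/-- If `k₁ ≠ 0`, `bₙ ≠ 0`, and `k_{i+1} bᵢ - kᵢ aᵢ ≠ 0` for
`1 ≤ i ≤ n-1`, then `A₁⁻¹` is lower Hessenberg: `(A₁⁻¹)_{ij} = 0` for `j - i > 1`. -/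
theorem stmt_4 {F : Type*} [Field F] {n : ℕ} (hn : 2 ≤ n)
    (a b k : ℕ → F)
    (A₁ : Matrix (Fin n) (Fin n) F)
    (hA : ∀ i j : Fin n, A₁ i j =
      if (i : ℕ) ≤ (j : ℕ) then k ((i : ℕ) + 1) * b ((j : ℕ) + 1)
      else k ((j : ℕ) + 1) * a ((j : ℕ) + 1))
    (hk1 : k 1 ≠ 0) (hbn : b n ≠ 0)
    (hc : ∀ i : ℕ, 1 ≤ i → i ≤ n - 1 → k (i + 1) * b i - k i * a i ≠ 0) :
    ∀ i j : Fin n, (j : ℕ) > (i : ℕ) + 1 → A₁⁻¹ i j = 0 :=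
  stmt_4_general a b k A₁ hA hk1 hc
end

section
/- Assume k_i ≠ 0 for all 1 ≤ i ≤ n. Let E be the n×n upper bidiagonal matrix with E_{ii} = 1 for all i, E_{i,i+1} = −k_i/k_{i+1} for 1 ≤ i ≤ n−1, and all other entries 0. Then E · A_1 is the lower triangular matrix T with, setting k_{n+1} = 1: T_{ii} = (k_i/k_{i+1})(k_{i+1} b_i − k_i a_i) for 1 ≤ i ≤ n−1, T_{nn} = k_n b_n, T_{ij} = (k_j a_j / k_{i+1})(k_{i+1} − k_i) for 1 ≤ j < i ≤ n−1, T_{nj} = k_j a_j for 1 ≤ j ≤ n−1, and T_{ij} = 0 for j > i. -/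
/-!
Row `i < n` of `E` is `eᵢ - (kᵢ/kᵢ₊₁) eᵢ₊₁`, so row `i` of `E * A₁` is row `i` of `A₁` minus
`kᵢ/kᵢ₊₁` times row `i + 1`. Above the diagonal the two rows are `kᵢ bⱼ` and `kᵢ₊₁ bⱼ`, which
cancel; on and below the diagonal the difference is the stated entry. The last row of `E` is `eₙ`,
so the last row of `E * A₁` is that of `A₁`.
-/

open Matrix

theorem Matrix.mul_apply_of_row_eq_single {m o R : Type*} [Fintype m] [DecidableEq m]
    [NonAssocSemiring R] {E : Matrix m m R} {i : m} (hEi : E i = Pi.single i 1)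
    (A : Matrix m o R) (j : o) : (E * A) i j = A i j := by
  rw [mul_apply', hEi, single_dotProduct, one_mul]

theorem Matrix.mul_apply_of_row_eq_single_add_single {m o R : Type*} [Fintype m]
    [DecidableEq m] [NonAssocSemiring R] {E : Matrix m m R} {i i' : m} {c : R}
    (hEi : E i = Pi.single i 1 + Pi.single i' c) (A : Matrix m o R) (j : o) :
    (E * A) i j = A i j + c * A i' j := by
  rw [mul_apply', hEi, add_dotProduct, single_dotProduct, single_dotProduct, one_mul]

section SinglePair

variable {F : Type*} [Field F] (a b k : ℕ → F)

/-- Indices are 0-based: `entryA₁ a b k i j` is the paper's `(A₁)_{i+1,j+1}`. -/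
def entryA₁ (i j : ℕ) : F :=
  if i ≤ j then k (i + 1) * b (j + 1) else k (j + 1) * a (j + 1)

theorem entryA₁_sub_ratio_mul_entryA₁_succ {i : ℕ} (j : ℕ) (hk : k (i + 2) ≠ 0) :
    entryA₁ a b k i j - k (i + 1) / k (i + 2) * entryA₁ a b k (i + 1) j =
      if i < j then 0
      else if i = j then
        k (i + 1) / k (i + 2) * (k (i + 2) * b (i + 1) - k (i + 1) * a (i + 1))
      else k (j + 1) * a (j + 1) / k (i + 2) * (k (i + 2) - k (i + 1)) := by
  unfold entryA₁
  rcases lt_trichotomy i j with hij | rfl | hji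
  · rw [if_pos hij.le, if_pos (Nat.succ_le_of_lt hij), if_pos hij]
    field_simp
    ring
  · rw [if_pos le_rfl, if_neg (Nat.not_succ_le_self i), if_neg (lt_irrefl i), if_pos rfl]
    field_simp
  · rw [if_neg hji.not_ge, if_neg (by omega), if_neg hji.not_gt, if_neg hji.ne']
    field_simp

end SinglePair

section Bidiagonal

variable {F : Type*} [Field F] {n : ℕ} (k : ℕ → F) {E : Matrix (Fin n) (Fin n) F}

theorem row_eq_single_of_bidiagonal_of_succ_eq
    (hE : ∀ i j : Fin n, E i j =
      if i = j then 1
      else if (j : ℕ) = (i : ℕ) + 1 then -(k ((i : ℕ) + 1) / k ((i : ℕ) + 2))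
      else 0)
    {i : Fin n} (hi : (i : ℕ) + 1 = n) : E i = Pi.single i 1 := by
  funext l
  simp only [hE, Pi.single_apply, eq_comm (a := l)]
  split_ifs <;> first | rfl | omega

theorem row_eq_single_add_single_of_bidiagonal_of_succ_lt
    (hE : ∀ i j : Fin n, E i j =
      if i = j then 1
      else if (j : ℕ) = (i : ℕ) + 1 then -(k ((i : ℕ) + 1) / k ((i : ℕ) + 2))
      else 0)
    {i : Fin n} (hi : (i : ℕ) + 1 < n) :
    E i = Pi.single i 1 + Pi.single ⟨i + 1, hi⟩ (-(k ((i : ℕ) + 1) / k ((i : ℕ) + 2))) := by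
  funext l
  simp only [hE, Pi.add_apply, Pi.single_apply, Fin.ext_iff]
  split_ifs <;> first | omega | simp

end Bidiagonal

theorem stmt_5_general {F : Type*} [Field F] {n : ℕ}
    (a b k : ℕ → F)
    (A₁ E T : Matrix (Fin n) (Fin n) F)
    (hA : ∀ i j : Fin n, A₁ i j =
      if (i : ℕ) ≤ (j : ℕ) then k ((i : ℕ) + 1) * b ((j : ℕ) + 1)
      else k ((j : ℕ) + 1) * a ((j : ℕ) + 1))
    (hk : ∀ i : ℕ, 1 ≤ i → i ≤ n → k i ≠ 0)
    (hE : ∀ i j : Fin n, E i j =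
      if i = j then 1
      else if (j : ℕ) = (i : ℕ) + 1 then -(k ((i : ℕ) + 1) / k ((i : ℕ) + 2))
      else 0)
    (hT : ∀ i j : Fin n, T i j =
      if (i : ℕ) < (j : ℕ) then 0
      else if i = j then
        (if (i : ℕ) + 1 = n then k n * b n
         else (k ((i : ℕ) + 1) / k ((i : ℕ) + 2)) *
           (k ((i : ℕ) + 2) * b ((i : ℕ) + 1) - k ((i : ℕ) + 1) * a ((i : ℕ) + 1)))
      else
        (if (i : ℕ) + 1 = n then k ((j : ℕ) + 1) * a ((j : ℕ) + 1)
         else (k ((j : ℕ) + 1) * a ((j : ℕ) + 1) / k ((i : ℕ) + 2)) *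
           (k ((i : ℕ) + 2) - k ((i : ℕ) + 1)))) :
    E * A₁ = T := by
  ext i j
  rw [hT]
  simp only [Fin.ext_iff]
  by_cases hlast : (i : ℕ) + 1 = n
  · rw [mul_apply_of_row_eq_single (row_eq_single_of_bidiagonal_of_succ_eq k hE hlast), hA]
    simp only [hlast, if_true]
    rcases lt_trichotomy (i : ℕ) j with hij | hij | hji
    · omega
    · rw [if_pos hij.le, if_neg hij.not_lt, if_pos hij, ← hij, hlast]
    · rw [if_neg hji.not_ge, if_neg hji.not_gt, if_neg hji.ne']
  · have hnext : (i : ℕ) + 1 < n := by omega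
    rw [mul_apply_of_row_eq_single_add_single
        (row_eq_single_add_single_of_bidiagonal_of_succ_lt k hE hnext), hA, hA,
      if_neg hlast, if_neg hlast, neg_mul, ← sub_eq_add_neg]
    exact entryA₁_sub_ratio_mul_entryA₁_succ a b k j (hk _ (by omega) (by omega))

/-- With `kᵢ ≠ 0` for `1 ≤ i ≤ n` and `k_{n+1} = 1`, the upper
bidiagonal matrix `E` (diagonal 1's, superdiagonal `-kᵢ/k_{i+1}`) satisfies
`E * A₁ = T`, where `T` is the stated lower triangular matrix. -/
theorem stmt_5 {F : Type*} [Field F] {n : ℕ} (hn : 2 ≤ n)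
    (a b k : ℕ → F)
    (A₁ E T : Matrix (Fin n) (Fin n) F)
    (hA : ∀ i j : Fin n, A₁ i j =
      if (i : ℕ) ≤ (j : ℕ) then k ((i : ℕ) + 1) * b ((j : ℕ) + 1)
      else k ((j : ℕ) + 1) * a ((j : ℕ) + 1))
    (hk : ∀ i : ℕ, 1 ≤ i → i ≤ n → k i ≠ 0)
    (hkn1 : k (n + 1) = 1)
    (hE : ∀ i j : Fin n, E i j =
      if i = j then 1
      else if (j : ℕ) = (i : ℕ) + 1 then -(k ((i : ℕ) + 1) / k ((i : ℕ) + 2))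
      else 0)
    (hT : ∀ i j : Fin n, T i j =
      if (i : ℕ) < (j : ℕ) then 0
      else if i = j then
        (if (i : ℕ) + 1 = n then k n * b n
         else (k ((i : ℕ) + 1) / k ((i : ℕ) + 2)) *
           (k ((i : ℕ) + 2) * b ((i : ℕ) + 1) - k ((i : ℕ) + 1) * a ((i : ℕ) + 1)))
      else
        (if (i : ℕ) + 1 = n then k ((j : ℕ) + 1) * a ((j : ℕ) + 1)
         else (k ((j : ℕ) + 1) * a ((j : ℕ) + 1) / k ((i : ℕ) + 2)) *
           (k ((i : ℕ) + 2) - k ((i : ℕ) + 1)))) :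
    E * A₁ = T :=
  stmt_5_general a b k A₁ E T hA hk hE hT
end

section
/- Assume k_i ≠ 0 for 1 ≤ i ≤ n and g_i ≠ 0 for 2 ≤ i ≤ n−1, and set k_{n+1} = 1. Let E_1 be the n×n matrix with 1's on the diagonal, entries −k_i/k_{i+1} on the superdiagonal (positions (i,i+1), 1 ≤ i ≤ n−1), and zeros elsewhere; let E_2 be the n×n matrix with 1's on the diagonal, entries −(k_i g_i)/(k_{i+1} g_{i−1}) in positions (i, i−1) for 3 ≤ i ≤ n, and zeros elsewhere. Then E_2 · E_1 · A_1 is the lower bidiagonal matrix with main diagonal entries k_i c_i/k_{i+1} for 1 ≤ i ≤ n (where k_{n+1} = 1), subdiagonal entry (2,1) equal to k_1 a_1 g_2/k_3, and subdiagonal entries (i+1, i) equal to k_i k_{i+1} g_{i+1} f_i/(k_{i+2} g_i) for 2 ≤ i ≤ n−1 (with k_{n+1} = 1 and g_n = 1), all other entries being 0. -/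
/-!
Above the diagonal, rows `i` and `i + 1` of `A₁` are proportional (`kᵢ bⱼ` against `kᵢ₊₁ bⱼ`),
so `E₁` clears the upper triangle and leaves a lower triangular matrix whose strictly lower part
has rank one: its entry `(i, j)`, `j < i`, is `(kⱼ aⱼ) (gᵢ / kᵢ₊₁)`. Subtracting
`(gᵢ / kᵢ₊₁) / (gᵢ₋₁ / kᵢ) = kᵢ gᵢ / (kᵢ₊₁ gᵢ₋₁)` times row `i - 1` from row `i`, as `E₂` does,
clears everything below the subdiagonal, and the subdiagonal entries that remain simplify by
`aᵢ gᵢ - cᵢ = kᵢ₊₁ fᵢ`.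
-/

namespace Matrix

variable {ι R : Type*} [Fintype ι] [NonUnitalNonAssocSemiring R]

theorem mul_apply_of_row_eq_zero {E A : Matrix ι ι R} {i : ι} (h : ∀ m, m ≠ i → E i m = 0)
    (j : ι) : (E * A) i j = E i i * A i j := by
  rw [mul_apply]
  exact Fintype.sum_eq_single i fun m hm => by rw [h m hm, zero_mul]

theorem mul_apply_of_row_eq_zero_of_ne_of_ne {E A : Matrix ι ι R} {i p : ι} (hp : p ≠ i)
    (h : ∀ m, m ≠ i → m ≠ p → E i m = 0) (j : ι) :
    (E * A) i j = E i i * A i j + E i p * A p j := by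
  rw [mul_apply]
  exact Fintype.sum_eq_add i p hp.symm fun m hm => by rw [h m hm.1 hm.2, zero_mul]

end Matrix

open Matrix

section Semiseparable

variable {R : Type*} [CommRing R] {n : ℕ}

def lowerSemiseparable (d x y : ℕ → R) : Matrix (Fin n) (Fin n) R := fun i j =>
  if (j : ℕ) < i then x j * y i else if i = j then d i else 0

theorem upperBidiagonal_mul_eq_lowerSemiseparable {E A : Matrix (Fin n) (Fin n) R}
    (u p q r d y : ℕ → R)
    (hE : ∀ i j : Fin n, E i j = if i = j then 1 else if (j : ℕ) = i + 1 then u i else 0)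
    (hA : ∀ i j : Fin n, A i j = if (i : ℕ) ≤ j then p i * q j else r j)
    (hu : ∀ i, i + 1 < n → u i * p (i + 1) = -p i)
    (hd : ∀ i, i + 1 < n → d i = p i * q i + u i * r i)
    (hdn : ∀ i, i + 1 = n → d i = p i * q i)
    (hy : ∀ i, 1 ≤ i → i + 1 < n → y i = 1 + u i)
    (hyn : ∀ i, i + 1 = n → y i = 1) :
    E * A = lowerSemiseparable d r y := by
  ext i j
  simp only [lowerSemiseparable]
  rcases Nat.lt_or_ge ((i : ℕ) + 1) n with hi | hi
  · have hi' : (⟨i + 1, hi⟩ : Fin n) ≠ i := fun h => by simp [Fin.ext_iff] at h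
    rw [mul_apply_of_row_eq_zero_of_ne_of_ne hi' fun m hmi hmi' => ?_]
    · simp only [hE, hA, if_true, Fin.ext_iff]
      rcases lt_trichotomy (j : ℕ) i with hji | hji | hij
      · simp (disch := omega) only [if_pos, if_neg]
        rw [hy i (by omega) hi]
        ring
      · simp (disch := omega) only [if_pos, if_neg]
        rw [hd i hi, hji]
        ring
      · simp (disch := omega) only [if_pos, if_neg]
        linear_combination q j * hu i hi
    · simp only [hE, Ne.symm hmi, if_false]
      exact if_neg fun h => hmi' (Fin.ext h)
  · replace hi : (i : ℕ) + 1 = n := by omega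
    rw [mul_apply_of_row_eq_zero fun m hmi => ?_]
    · simp only [hE, hA, if_true, Fin.ext_iff]
      rcases lt_trichotomy (j : ℕ) i with hji | hji | hij
      · simp (disch := omega) only [if_pos, if_neg]
        rw [hyn i hi]
        ring
      · simp (disch := omega) only [if_pos, if_neg]
        rw [hdn i hi, hji]
        ring
      · omega
    · simp only [hE, Ne.symm hmi, if_false]
      exact if_neg (by omega)

theorem lowerBidiagonal_mul_lowerSemiseparable {E : Matrix (Fin n) (Fin n) R} (l d x y : ℕ → R)
    (hE : ∀ i j : Fin n, E i j =
      if i = j then 1 else if (i : ℕ) = j + 1 ∧ 2 ≤ (i : ℕ) then l i else 0)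
    (hl : ∀ i, 1 ≤ i → i + 1 < n → l (i + 1) * y i + y (i + 1) = 0) (i j : Fin n) :
    (E * lowerSemiseparable d x y : Matrix (Fin n) (Fin n) R) i j =
      if i = j then d i
      else if (i : ℕ) = j + 1 then (if (j : ℕ) = 0 then x j * y i else x j * y i + l i * d j)
      else 0 := by
  rcases Nat.lt_or_ge (i : ℕ) 2 with hi | hi
  · rw [mul_apply_of_row_eq_zero fun m hmi => ?_]
    · simp only [hE, lowerSemiseparable, if_true, one_mul, Fin.ext_iff]
      rcases lt_trichotomy (j : ℕ) i with hji | hji | hij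
      · simp (disch := omega) only [if_pos, if_neg]
      · simp (disch := omega) only [↓reduceIte, if_neg, hji]
      · simp (disch := omega) only [if_pos, if_neg]
    · simp only [hE, Ne.symm hmi, if_false]
      exact if_neg (by omega)
  · obtain ⟨p, hp⟩ : ∃ p : Fin n, (i : ℕ) = p + 1 := ⟨⟨i - 1, by omega⟩, by simp; omega⟩
    have hpi : p ≠ i := fun h => by simp [h] at hp
    rw [mul_apply_of_row_eq_zero_of_ne_of_ne hpi fun m hmi hmp => ?_]
    · simp only [hE, lowerSemiseparable, if_true, true_and, Fin.ext_iff, hp]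
      rcases (by omega : (j : ℕ) < p ∨ (j : ℕ) = p ∨ (j : ℕ) = p + 1 ∨ (p : ℕ) + 1 < j)
        with hjp | hjp | hjp | hjp
      · simp (disch := omega) only [if_pos, if_neg]
        linear_combination x j * hl p (by omega) (by omega)
      · simp (disch := omega) only [↓reduceIte, if_pos, if_neg, hjp]
        ring
      · simp (disch := omega) only [↓reduceIte, if_pos, if_neg, hjp]
        ring
      · simp (disch := omega) only [if_pos, if_neg]
        ring
    · simp only [hE, Ne.symm hmi, if_false]
      exact if_neg (by omega)

end Semiseparable

theorem E₁_mul_A₁_eq_lowerSemiseparable {F : Type*} [Field F] {n : ℕ} (a b k c g : ℕ → F)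
    (A₁ E₁ : Matrix (Fin n) (Fin n) F)
    (hA : ∀ i j : Fin n, A₁ i j =
      if (i : ℕ) ≤ (j : ℕ) then k ((i : ℕ) + 1) * b ((j : ℕ) + 1)
      else k ((j : ℕ) + 1) * a ((j : ℕ) + 1))
    (hc : ∀ i : ℕ, 1 ≤ i → i ≤ n - 1 → c i = k (i + 1) * b i - k i * a i)
    (hcn : c n = b n)
    (hg : ∀ i : ℕ, 2 ≤ i → i ≤ n - 1 → g i = k (i + 1) - k i)
    (hgn : g n = 1)
    (hk : ∀ i : ℕ, 1 ≤ i → i ≤ n → k i ≠ 0)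
    (hkn1 : k (n + 1) = 1)
    (hE1 : ∀ i j : Fin n, E₁ i j =
      if i = j then 1
      else if (j : ℕ) = (i : ℕ) + 1 then -(k ((i : ℕ) + 1) / k ((i : ℕ) + 2))
      else 0) :
    E₁ * A₁ = lowerSemiseparable (fun i => k (i + 1) * c (i + 1) / k (i + 2))
      (fun j => k (j + 1) * a (j + 1)) (fun i => g (i + 1) / k (i + 2)) := by
  refine upperBidiagonal_mul_eq_lowerSemiseparable (fun i => -(k (i + 1) / k (i + 2)))
    (fun i => k (i + 1)) (fun j => b (j + 1)) _ _ _ hE1 hA (fun i hi => ?_) (fun i hi => ?_)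
    (fun i hi => ?_) (fun i _ hi => ?_) (fun i hi => ?_)
  · field_simp [hk (i + 2) (by omega) (by omega)]
  · rw [hc (i + 1) (by omega) (by omega)]
    field_simp [hk (i + 2) (by omega) (by omega)]
    ring
  · subst hi
    simp [hkn1, hcn]
  · rw [hg (i + 1) (by omega) (by omega)]
    field_simp [hk (i + 2) (by omega) (by omega)]
    ring
  · subst hi
    simp [hkn1, hgn]

theorem stmt_6_general {F : Type*} [Field F] {n : ℕ}
    (a b k c f g : ℕ → F)
    (A₁ E₁ E₂ L : Matrix (Fin n) (Fin n) F)
    (hA : ∀ i j : Fin n, A₁ i j =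
      if (i : ℕ) ≤ (j : ℕ) then k ((i : ℕ) + 1) * b ((j : ℕ) + 1)
      else k ((j : ℕ) + 1) * a ((j : ℕ) + 1))
    (hc : ∀ i : ℕ, 1 ≤ i → i ≤ n - 1 → c i = k (i + 1) * b i - k i * a i)
    (hcn : c n = b n)
    (hf : ∀ i : ℕ, 2 ≤ i → i ≤ n - 1 → f i = a i - b i)
    (hg : ∀ i : ℕ, 2 ≤ i → i ≤ n - 1 → g i = k (i + 1) - k i)
    (hgn : g n = 1)
    (hk : ∀ i : ℕ, 1 ≤ i → i ≤ n → k i ≠ 0)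
    (hgne : ∀ i : ℕ, 2 ≤ i → i ≤ n - 1 → g i ≠ 0)
    (hkn1 : k (n + 1) = 1)
    (hE1 : ∀ i j : Fin n, E₁ i j =
      if i = j then 1
      else if (j : ℕ) = (i : ℕ) + 1 then -(k ((i : ℕ) + 1) / k ((i : ℕ) + 2))
      else 0)
    (hE2 : ∀ i j : Fin n, E₂ i j =
      if i = j then 1
      else if (i : ℕ) = (j : ℕ) + 1 ∧ 3 ≤ (i : ℕ) + 1 then
        -((k ((i : ℕ) + 1) * g ((i : ℕ) + 1)) / (k ((i : ℕ) + 2) * g (i : ℕ)))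
      else 0)
    (hL : ∀ i j : Fin n, L i j =
      if i = j then k ((i : ℕ) + 1) * c ((i : ℕ) + 1) / k ((i : ℕ) + 2)
      else if (i : ℕ) = (j : ℕ) + 1 then
        (if (j : ℕ) = 0 then k 1 * a 1 * g 2 / k 3
         else k ((j : ℕ) + 1) * k ((j : ℕ) + 2) * g ((j : ℕ) + 2) * f ((j : ℕ) + 1) /
           (k ((j : ℕ) + 3) * g ((j : ℕ) + 1)))
      else 0) :
    E₂ * E₁ * A₁ = L := by
  ext i j
  rw [Matrix.mul_assoc, E₁_mul_A₁_eq_lowerSemiseparable a b k c g A₁ E₁ hA hc hcn hg hgn hk hkn1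
    hE1, lowerBidiagonal_mul_lowerSemiseparable
    (fun i => -(k (i + 1) * g (i + 1) / (k (i + 2) * g i))) _ _ _ (fun i j => ?_)
    (fun i hi hi' => ?_), hL]
  · split_ifs with hij hsub hj0 <;> try rfl
    · norm_num [hsub, hj0]
      ring
    · simp only [hsub, add_assoc, Nat.reduceAdd]
      have hcg : c (j + 1) = a (j + 1) * g (j + 1) - k (j + 2) * f (j + 1) := by
        rw [hc _ (by omega) (by omega), hf _ (by omega) (by omega),
          hg _ (by omega) (by omega)]
        ring
      rw [hcg]
      field_simp [hk (j + 2) (by omega) (by omega), hgne (j + 1) (by omega) (by omega)]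
      ring
  · simp only [hE2, Nat.reduceLeDiff]
  · field_simp [hk (i + 2) (by omega) (by omega), hgne (i + 1) (by omega) (by omega)]
    ring

/-- With `kᵢ ≠ 0` (`1 ≤ i ≤ n`), `gᵢ ≠ 0` (`2 ≤ i ≤ n-1`) and
`k_{n+1} = 1`, the matrices `E₁` (unit diagonal, superdiagonal `-kᵢ/k_{i+1}`)
and `E₂` (unit diagonal, entries `-(kᵢgᵢ)/(k_{i+1}g_{i-1})` at `(i,i-1)` for
`3 ≤ i ≤ n`) satisfy `E₂ * E₁ * A₁ = L`, the stated lower bidiagonal matrix. -/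
theorem stmt_6 {F : Type*} [Field F] {n : ℕ} (hn : 3 ≤ n)
    (a b k c f g : ℕ → F)
    (A₁ E₁ E₂ L : Matrix (Fin n) (Fin n) F)
    (hA : ∀ i j : Fin n, A₁ i j =
      if (i : ℕ) ≤ (j : ℕ) then k ((i : ℕ) + 1) * b ((j : ℕ) + 1)
      else k ((j : ℕ) + 1) * a ((j : ℕ) + 1))
    (hc0 : c 0 = 1)
    (hc : ∀ i : ℕ, 1 ≤ i → i ≤ n - 1 → c i = k (i + 1) * b i - k i * a i)
    (hcn : c n = b n)
    (hf : ∀ i : ℕ, 2 ≤ i → i ≤ n - 1 → f i = a i - b i)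
    (hg : ∀ i : ℕ, 2 ≤ i → i ≤ n - 1 → g i = k (i + 1) - k i)
    (hgn : g n = 1)
    (hk : ∀ i : ℕ, 1 ≤ i → i ≤ n → k i ≠ 0)
    (hgne : ∀ i : ℕ, 2 ≤ i → i ≤ n - 1 → g i ≠ 0)
    (hkn1 : k (n + 1) = 1)
    (hE1 : ∀ i j : Fin n, E₁ i j =
      if i = j then 1
      else if (j : ℕ) = (i : ℕ) + 1 then -(k ((i : ℕ) + 1) / k ((i : ℕ) + 2))
      else 0)
    (hE2 : ∀ i j : Fin n, E₂ i j =
      if i = j then 1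
      else if (i : ℕ) = (j : ℕ) + 1 ∧ 3 ≤ (i : ℕ) + 1 then
        -((k ((i : ℕ) + 1) * g ((i : ℕ) + 1)) / (k ((i : ℕ) + 2) * g (i : ℕ)))
      else 0)
    (hL : ∀ i j : Fin n, L i j =
      if i = j then k ((i : ℕ) + 1) * c ((i : ℕ) + 1) / k ((i : ℕ) + 2)
      else if (i : ℕ) = (j : ℕ) + 1 then
        (if (j : ℕ) = 0 then k 1 * a 1 * g 2 / k 3
         else k ((j : ℕ) + 1) * k ((j : ℕ) + 2) * g ((j : ℕ) + 2) * f ((j : ℕ) + 1) /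
           (k ((j : ℕ) + 3) * g ((j : ℕ) + 1)))
      else 0) :
    E₂ * E₁ * A₁ = L :=
  stmt_6_general a b k c f g A₁ E₁ E₂ L hA hc hcn hf hg hgn hk hgne hkn1 hE1 hE2 hL
end

section
/- Let B be the n×n matrix over F with entries: B_{ij} = 0 if j − i > 1; B_{i,i+1} = −1/c_i for 1 ≤ i ≤ n−1; B_{11} = 1/c_1; B_{nn} = k_{n−1} b_{n−1}/(k_n c_{n−1} c_n); B_{ii} = (k_{i−1} b_{i−1} − k_{i+1} a_{i−1})/(c_{i−1} c_i) for 2 ≤ i ≤ n−1; and B_{ij} = (−1)^{i+j} d_{j−1} g_i (∏_{ν=j+1}^{i−1} k_ν f_ν) / (∏_{ν=j−1}^{i} c_ν) for i − j ≥ 1, where the product over an empty index range equals 1. Assume k_n ≠ 0 and c_i ≠ 0 for i = 1,…,n. Then A_2 · B = I, the n×n identity matrix. -/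
/-!
Fix a column `j` of `B` with entries `w`. Row `t` of `A₂ * w` is
`E t = k (t+1) * P t + ∑_{t ≤ x < n} k (x+1) b (x+1) w x` with `P t = ∑_{x < t} a (x+1) w x`,
and `E t - E (t+1) = g (t+1) P t + c (t+1) w t`. Below the diagonal `w t = -g (t+1) P t / c (t+1)`,
so these increments vanish; this rests on the closed form of `P t`, obtained from
`P (t+1) = -k (t+1) f (t+1) P t / c (t+1)` since `c - a g = -k f`, which is where the products in
the entries of `B` come from. Around the diagonal the increments are `±1`, and the last row gives
`E (n-1) = [n-1 = j]`, so `E t = [t = j]` by downward induction.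

Rows and columns are numbered from `0` and the sequences `a, b, k, c, d, f, g` from `1`, as in the
statement: row `i` of the paper is row `i - 1` here.
-/

open Finset

theorem eq_of_sub_succ_eq_sub_succ {α : Type*} [AddCommGroup α] {u v : ℕ → α} {m : ℕ}
    (hstep : ∀ t < m, u t - u (t + 1) = v t - v (t + 1)) (hm : u m = v m) :
    ∀ t ≤ m, u t = v t := by
  intro t ht
  induction ht using Nat.decreasingInduction with
  | self => exact hm
  | of_succ t ht ih => exact sub_left_injective ((hstep t ht).trans (by rw [ih]))

section

variable {F : Type*} [Field F]

section BrownianRow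

def weightedPrefix (a w : ℕ → F) (t : ℕ) : F := ∑ x ∈ range t, a (x + 1) * w x

def brownianRow (n : ℕ) (a b k w : ℕ → F) (t : ℕ) : F :=
  k (t + 1) * weightedPrefix a w t + ∑ x ∈ Ico t n, k (x + 1) * b (x + 1) * w x

theorem sum_brownian_mul_eq_brownianRow {n : ℕ} {a b k : ℕ → F} {A : Matrix (Fin n) (Fin n) F}
    (hA : ∀ i j : Fin n, A i j =
      if (i : ℕ) ≤ (j : ℕ) then k ((j : ℕ) + 1) * b ((j : ℕ) + 1)
      else k ((i : ℕ) + 1) * a ((j : ℕ) + 1))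
    (w : ℕ → F) (i : Fin n) :
    ∑ x, A i x * w x = brownianRow n a b k w i := by
  simp only [hA]
  rw [Fin.sum_univ_eq_sum_range (fun x => (if (i : ℕ) ≤ x then k (x + 1) * b (x + 1)
    else k (i + 1) * a (x + 1)) * w x), ← sum_range_add_sum_Ico _ i.isLt.le, brownianRow,
    weightedPrefix, mul_sum]
  congr 1
  · refine sum_congr rfl fun x hx => ?_
    rw [if_neg (by rw [mem_range] at hx; omega), mul_assoc]
  · refine sum_congr rfl fun x hx => ?_
    rw [if_pos (mem_Ico.mp hx).1]

theorem brownianRow_sub_succ {n t : ℕ} (ht : t < n) (a b k w : ℕ → F) :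
    brownianRow n a b k w t - brownianRow n a b k w (t + 1) =
      (k (t + 1) - k (t + 2)) * weightedPrefix a w t +
        (k (t + 1) * b (t + 1) - k (t + 2) * a (t + 1)) * w t := by
  rw [brownianRow, brownianRow, weightedPrefix, weightedPrefix, sum_range_succ,
    sum_eq_sum_Ico_succ_bot ht]
  ring

theorem brownianRow_pred {n : ℕ} (hn : 0 < n) (a b k w : ℕ → F) :
    brownianRow n a b k w (n - 1) = k n * (weightedPrefix a w (n - 1) + b n * w (n - 1)) := by
  obtain ⟨m, rfl⟩ := Nat.exists_eq_add_of_lt hn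
  rw [brownianRow, zero_add, Nat.add_sub_cancel, Nat.Ico_succ_singleton, sum_singleton]
  ring

end BrownianRow

structure InverseCoeffs (n : ℕ) (a b k c d f g : ℕ → F) : Prop where
  c_zero : c 0 = 1
  c_eq : ∀ i, 1 ≤ i → i ≤ n - 1 → c i = k i * b i - k (i + 1) * a i
  c_last : c n = b n
  d_zero : d 0 = a 1
  d_eq : ∀ i, 1 ≤ i → i ≤ n - 2 → d i = k i * a (i + 1) * b i - k (i + 1) * a i * b (i + 1)
  f_eq : ∀ i, 2 ≤ i → i ≤ n - 1 → f i = a i - b i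
  g_eq : ∀ i, 2 ≤ i → i ≤ n - 1 → g i = k i - k (i + 1)
  g_last : g n = 1

theorem InverseCoeffs.c_sub_mul_g {n : ℕ} {a b k c d f g : ℕ → F}
    (hco : InverseCoeffs n a b k c d f g) {i : ℕ} (h₁ : 2 ≤ i) (h₂ : i ≤ n - 1) :
    c i - a i * g i = -(k i * f i) := by
  rw [hco.c_eq i (by omega) h₂, hco.g_eq i h₁ h₂, hco.f_eq i h₁ h₂]
  ring

def hessenbergEntry (n : ℕ) (a b k c d f g : ℕ → F) (i j : ℕ) : F :=
  if j + 1 > i + 1 + 1 then 0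
  else if j + 1 = i + 1 + 1 then -1 / c (i + 1)
  else if i = j then
    (if i + 1 = 1 then 1 / c 1
     else if i + 1 = n then k (n - 1) * b (n - 1) / (k n * c (n - 1) * c n)
     else (k i * b i - k (i + 2) * a i) / (c i * c (i + 1)))
  else (-1 : F) ^ ((i + 1) + (j + 1)) * d j * g (i + 1) *
    (∏ ν ∈ Icc (j + 2) i, k ν * f ν) / ∏ ν ∈ Icc j (i + 1), c ν

def prefixFormula (c d f k : ℕ → F) (j t : ℕ) : F :=
  (-1 : F) ^ (t + j + 1) * d j * (∏ ν ∈ Icc (j + 2) t, k ν * f ν) / ∏ ν ∈ Icc j t, c ν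

theorem prefixFormula_succ_self (c d f k : ℕ → F) (j : ℕ) :
    prefixFormula c d f k j (j + 1) = d j / (c j * c (j + 1)) := by
  rw [prefixFormula, Icc_eq_empty (by omega), prod_empty,
    prod_Icc_succ_top (by omega), Icc_self, prod_singleton,
    Even.neg_one_pow ⟨j + 1, by ring⟩]
  ring

theorem prefixFormula_succ (c d f k : ℕ → F) {j t : ℕ} (h : j < t) :
    prefixFormula c d f k j (t + 1) =
      -(k (t + 1) * f (t + 1)) * prefixFormula c d f k j t / c (t + 1) := by
  rw [prefixFormula, prefixFormula, prod_Icc_succ_top (by omega), prod_Icc_succ_top (by omega)]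
  ring

section HessenbergColumn

variable {n : ℕ} {a b k c d f g : ℕ → F}

theorem hessenbergEntry_of_succ_lt {i j : ℕ} (h : i + 1 < j) :
    hessenbergEntry n a b k c d f g i j = 0 :=
  if_pos (by omega)

theorem hessenbergEntry_succ (i : ℕ) :
    hessenbergEntry n a b k c d f g i (i + 1) = -1 / c (i + 1) := by
  simp [hessenbergEntry]

theorem hessenbergEntry_zero_zero : hessenbergEntry n a b k c d f g 0 0 = 1 / c 1 := by
  simp [hessenbergEntry]

theorem hessenbergEntry_self {i : ℕ} (h₁ : 1 ≤ i) (h₂ : i + 1 < n) :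
    hessenbergEntry n a b k c d f g i i = (k i * b i - k (i + 2) * a i) / (c i * c (i + 1)) := by
  rw [hessenbergEntry, if_neg (by omega), if_neg (by omega), if_pos rfl, if_neg (by omega),
    if_neg (by omega)]

theorem hessenbergEntry_pred_pred (hn : 2 ≤ n) :
    hessenbergEntry n a b k c d f g (n - 1) (n - 1) =
      k (n - 1) * b (n - 1) / (k n * c (n - 1) * c n) := by
  rw [hessenbergEntry, if_neg (by omega), if_neg (by omega), if_pos rfl, if_neg (by omega),
    if_pos (by omega)]

theorem hessenbergEntry_of_lt {i j : ℕ} (h : j < i) :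
    hessenbergEntry n a b k c d f g i j =
      -(g (i + 1) * prefixFormula c d f k j i / c (i + 1)) := by
  rw [hessenbergEntry, if_neg (by omega), if_neg (by omega), if_neg (by omega), prefixFormula,
    prod_Icc_succ_top (by omega)]
  ring

theorem weightedPrefix_hessenbergEntry_eq_zero {j t : ℕ} (h : t < j) :
    weightedPrefix a (hessenbergEntry n a b k c d f g · j) t = 0 :=
  sum_eq_zero fun x hx =>
    mul_eq_zero_of_right _ (hessenbergEntry_of_succ_lt (by rw [mem_range] at hx; omega))

theorem weightedPrefix_hessenbergEntry_self {j : ℕ} (h : 1 ≤ j) :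
    weightedPrefix a (hessenbergEntry n a b k c d f g · j) j = -(a j / c j) := by
  obtain ⟨i, rfl⟩ := Nat.exists_eq_add_of_le' h
  rw [weightedPrefix, sum_range_succ, ← weightedPrefix,
    weightedPrefix_hessenbergEntry_eq_zero (Nat.lt_succ_self i), hessenbergEntry_succ]
  ring

theorem weightedPrefix_hessenbergEntry_eq_prefixFormula (hco : InverseCoeffs n a b k c d f g)
    (hc : ∀ i, 1 ≤ i → i ≤ n → c i ≠ 0) {j t : ℕ} (hjt : j < t) (htn : t < n) :
    weightedPrefix a (hessenbergEntry n a b k c d f g · j) t = prefixFormula c d f k j t := by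
  induction t, hjt using Nat.le_induction with
  | base =>
    rw [weightedPrefix, sum_range_succ, ← weightedPrefix, prefixFormula_succ_self]
    rcases Nat.eq_zero_or_pos j with rfl | hj
    · rw [weightedPrefix, sum_range_zero, hessenbergEntry_zero_zero, hco.c_zero, hco.d_zero]
      ring
    · have hcj := hc j hj (by omega)
      have hcj1 := hc (j + 1) (by omega) (by omega)
      rw [weightedPrefix_hessenbergEntry_self hj, hessenbergEntry_self hj htn,
        hco.d_eq j hj (by omega)]
      field_simp
      linear_combination (-a j) * hco.c_eq (j + 1) (by omega) (by omega)
  | succ t hjt ih =>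
    have hct := hc (t + 1) (by omega) (by omega)
    rw [weightedPrefix, sum_range_succ, ← weightedPrefix, ih (by omega),
      prefixFormula_succ _ _ _ _ hjt, hessenbergEntry_of_lt hjt,
      ← hco.c_sub_mul_g (by omega) (by omega)]
    field_simp
    ring

theorem brownianRow_hessenbergEntry_sub_succ (hco : InverseCoeffs n a b k c d f g)
    (hc : ∀ i, 1 ≤ i → i ≤ n → c i ≠ 0) {j t : ℕ} (ht : t + 1 < n) :
    brownianRow n a b k (hessenbergEntry n a b k c d f g · j) t -
        brownianRow n a b k (hessenbergEntry n a b k c d f g · j) (t + 1) =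
      (if t = j then 1 else 0) - (if t + 1 = j then 1 else 0) := by
  have hct := hc (t + 1) (by omega) (by omega)
  rw [brownianRow_sub_succ (by omega), ← hco.c_eq (t + 1) (by omega) (by omega)]
  rcases lt_trichotomy t j with htj | rfl | hjt
  · rw [weightedPrefix_hessenbergEntry_eq_zero htj, if_neg htj.ne]
    rcases (Nat.succ_le_of_lt htj).lt_or_eq with htj' | rfl
    · rw [hessenbergEntry_of_succ_lt htj', if_neg htj'.ne]
      ring
    · rw [hessenbergEntry_succ, if_pos rfl]
      field_simp
      ring
  · rw [if_pos rfl, if_neg (by omega)]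
    rcases Nat.eq_zero_or_pos t with rfl | ht0
    · rw [weightedPrefix, sum_range_zero, hessenbergEntry_zero_zero]
      field_simp
      ring
    · have hct' := hc t ht0 (by omega)
      rw [weightedPrefix_hessenbergEntry_self ht0, hessenbergEntry_self ht0 ht]
      field_simp
      linear_combination -hco.c_eq t ht0 (by omega)
  · rw [weightedPrefix_hessenbergEntry_eq_prefixFormula hco hc hjt (by omega),
      hessenbergEntry_of_lt hjt, hco.g_eq (t + 1) (by omega) (by omega), if_neg (by omega),
      if_neg (by omega)]
    field_simp
    ring

theorem brownianRow_hessenbergEntry_pred (hco : InverseCoeffs n a b k c d f g)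
    (hc : ∀ i, 1 ≤ i → i ≤ n → c i ≠ 0) (hkn : k n ≠ 0) (hn : 2 ≤ n) {j : ℕ} (hjn : j < n) :
    brownianRow n a b k (hessenbergEntry n a b k c d f g · j) (n - 1) =
      if n - 1 = j then 1 else 0 := by
  have hbn : b n ≠ 0 := hco.c_last ▸ hc n (by omega) le_rfl
  rw [brownianRow_pred (by omega)]
  rcases (show j ≤ n - 1 by omega).lt_or_eq with hj | rfl
  · rw [weightedPrefix_hessenbergEntry_eq_prefixFormula hco hc hj (by omega),
      hessenbergEntry_of_lt hj, Nat.sub_add_cancel (by omega), hco.g_last, hco.c_last,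
      if_neg hj.ne']
    field_simp
    ring
  · have hcn1 := hc (n - 1) (by omega) (by omega)
    have hcn1_eq := hco.c_eq (n - 1) (by omega) le_rfl
    rw [Nat.sub_add_cancel (by omega)] at hcn1_eq
    rw [weightedPrefix_hessenbergEntry_self (by omega), hessenbergEntry_pred_pred hn, hco.c_last,
      if_pos rfl]
    field_simp
    linear_combination -hcn1_eq

theorem brownianRow_hessenbergEntry (hco : InverseCoeffs n a b k c d f g)
    (hc : ∀ i, 1 ≤ i → i ≤ n → c i ≠ 0) (hkn : k n ≠ 0) (hn : 2 ≤ n) {j t : ℕ} (hjn : j < n)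
    (htn : t < n) :
    brownianRow n a b k (hessenbergEntry n a b k c d f g · j) t = if t = j then 1 else 0 :=
  eq_of_sub_succ_eq_sub_succ (v := fun t => if t = j then 1 else 0)
    (fun _ hs => brownianRow_hessenbergEntry_sub_succ hco hc (by omega))
    (brownianRow_hessenbergEntry_pred hco hc hkn hn hjn) t (by omega)

end HessenbergColumn

end

/-- With `A₂` the Brownian-type matrix `(A₂)_{ij} = kⱼbⱼ (i ≤ j)`,
`kᵢaⱼ (i > j)` (1-based), and `B` the lower Hessenberg matrix of formulae (8),
assuming `kₙ ≠ 0` and `cᵢ ≠ 0` for `i = 1,…,n`, we have `A₂ * B = 1`. -/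
theorem stmt_10 {F : Type*} [Field F] {n : ℕ} (hn : 3 ≤ n)
    (a b k c d f g : ℕ → F)
    (A₂ B : Matrix (Fin n) (Fin n) F)
    (hA : ∀ i j : Fin n, A₂ i j =
      if (i : ℕ) ≤ (j : ℕ) then k ((j : ℕ) + 1) * b ((j : ℕ) + 1)
      else k ((i : ℕ) + 1) * a ((j : ℕ) + 1))
    (hc0 : c 0 = 1)
    (hc : ∀ i : ℕ, 1 ≤ i → i ≤ n - 1 → c i = k i * b i - k (i + 1) * a i)
    (hcn : c n = b n)
    (hd0 : d 0 = a 1)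
    (hd : ∀ i : ℕ, 1 ≤ i → i ≤ n - 2 →
      d i = k i * a (i + 1) * b i - k (i + 1) * a i * b (i + 1))
    (hf : ∀ i : ℕ, 2 ≤ i → i ≤ n - 1 → f i = a i - b i)
    (hg : ∀ i : ℕ, 2 ≤ i → i ≤ n - 1 → g i = k i - k (i + 1))
    (hgn : g n = 1)
    (hB : ∀ i j : Fin n, B i j =
      if ((j : ℕ) + 1) > ((i : ℕ) + 1) + 1 then 0
      else if ((j : ℕ) + 1) = ((i : ℕ) + 1) + 1 then -1 / c ((i : ℕ) + 1)
      else if (i : ℕ) = (j : ℕ) then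
        (if (i : ℕ) + 1 = 1 then 1 / c 1
         else if (i : ℕ) + 1 = n then k (n - 1) * b (n - 1) / (k n * c (n - 1) * c n)
         else (k (i : ℕ) * b (i : ℕ) - k ((i : ℕ) + 2) * a (i : ℕ)) /
           (c (i : ℕ) * c ((i : ℕ) + 1)))
      else (-1 : F) ^ (((i : ℕ) + 1) + ((j : ℕ) + 1)) * d (j : ℕ) * g ((i : ℕ) + 1) *
        (∏ ν ∈ Finset.Icc ((j : ℕ) + 2) (i : ℕ), k ν * f ν) /
        ∏ ν ∈ Finset.Icc (j : ℕ) ((i : ℕ) + 1), c ν)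
    (hkn : k n ≠ 0)
    (hcne : ∀ i : ℕ, 1 ≤ i → i ≤ n → c i ≠ 0) :
    A₂ * B = 1 := by
  have hco : InverseCoeffs n a b k c d f g := ⟨hc0, hc, hcn, hd0, hd, hf, hg, hgn⟩
  ext i j
  have hBj : ∀ x, B x j = hessenbergEntry n a b k c d f g x j := fun x => hB x j
  rw [Matrix.mul_apply, Matrix.one_apply]
  simp only [hBj]
  rw [sum_brownian_mul_eq_brownianRow hA (hessenbergEntry n a b k c d f g · j),
    brownianRow_hessenbergEntry hco hcne hkn (by omega) j.isLt i.isLt]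
  simp only [Fin.val_inj]
end

section
/- Let B be the n×n matrix over F with entries: B_{ij} = 0 if j − i > 1; B_{i,i+1} = −1/c_i for 1 ≤ i ≤ n−1; B_{11} = 1/c_1; B_{nn} = k_{n−1} b_{n−1}/(k_n c_{n−1} c_n); B_{ii} = (k_{i−1} b_{i−1} − k_{i+1} a_{i−1})/(c_{i−1} c_i) for 2 ≤ i ≤ n−1; and B_{ij} = (−1)^{i+j} d_{j−1} g_i (∏_{ν=j+1}^{i−1} k_ν f_ν) / (∏_{ν=j−1}^{i} c_ν) for i − j ≥ 1, where the product over an empty index range equals 1. Assume k_n ≠ 0 and c_i ≠ 0 for i = 1,…,n. Then B · A_2 = I, the n×n identity matrix. -/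
/-!
Column `j` of `A₂` is `k_j b_j` down to row `j` and `k_l a_j` below it, so entry `(i, j)` of
`B A₂` is `k_j b_j σ_i(j) + a_j τ_i(j)`, with prefix sum `σ_i(j) = ∑_{l ≤ j} B_{il}` and
the weighted tail `τ_i(j) = ∑_{l > j} k_l B_{il}`. Put
`w_{ij} = (-1)^{i+j} g_i ∏_{ν=j+1}^{i-1} k_ν f_ν / ∏_{ν=j}^{i} c_ν`; below the diagonal
`B_{il} = d_{l-1} w_{il} / c_{l-1}`, and the two expressions
`d_l = a_{l+1} c_l + a_l k_{l+1} f_{l+1} = b_{l+1} c_l + k_l b_l f_{l+1}`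
make both sums telescope: `σ_i(j) = a_j w_{ij}` and `τ_i(j) = -k_j b_j w_{ij}` for `j < i`, so
the entry vanishes. On the diagonal `σ_i(i) = 1/c_i` (`1/(k_n c_n)` in the last row), and
`B_{i,i+1} = -1/c_i` makes `σ_i(j) = τ_i(j) = 0` for `j > i`.
-/

open Finset

namespace Brownian

variable {F : Type*} [Field F]

/- `mat` and `inv` are the matrices `A₂` and `B`, indexed from `1` as in the paper. -/

def mat (a b k : ℕ → F) (l j : ℕ) : F :=
  if l ≤ j then k j * b j else k l * a j

def inv (n : ℕ) (a b k c d f g : ℕ → F) (i l : ℕ) : F :=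
  if i + 1 < l then 0
  else if l = i + 1 then -1 / c i
  else if i = l then
    if i = 1 then 1 / c 1
    else if i = n then k (n - 1) * b (n - 1) / (k n * c (n - 1) * c n)
    else (k (i - 1) * b (i - 1) - k (i + 1) * a (i - 1)) / (c (i - 1) * c i)
  else (-1) ^ (i + l) * d (l - 1) * g i * (∏ ν ∈ Icc (l + 1) (i - 1), k ν * f ν) /
    ∏ ν ∈ Icc (l - 1) i, c ν

def weight (k c f g : ℕ → F) (i j : ℕ) : F :=
  (-1) ^ (i + j) * g i * (∏ ν ∈ Ico (j + 1) i, k ν * f ν) / ∏ ν ∈ Icc j i, c ν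

variable {n i j l m : ℕ} {a b k c d f g : ℕ → F}

theorem sum_mul_mat (β : ℕ → F) (hj : j ≤ n) :
    ∑ l ∈ range n, β (l + 1) * mat a b k (l + 1) j =
      k j * b j * ∑ l ∈ range j, β (l + 1) +
        a j * ∑ l ∈ Ico j n, k (l + 1) * β (l + 1) := by
  rw [← sum_range_add_sum_Ico _ hj, mul_sum, mul_sum]
  congr 1
  · refine sum_congr rfl fun l hl => ?_
    rw [mem_range] at hl
    rw [mat, if_pos (by omega)]
    ring
  · refine sum_congr rfl fun l hl => ?_
    rw [mem_Ico] at hl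
    rw [mat, if_neg (by omega)]
    ring

theorem inv_eq_zero (h : i + 1 < l) : inv n a b k c d f g i l = 0 := if_pos h

theorem inv_succ : inv n a b k c d f g i (i + 1) = -1 / c i := by simp [inv]

theorem inv_one_one : inv n a b k c d f g 1 1 = 1 / c 1 := by simp [inv]

theorem inv_self_last (hm : 1 ≤ m) :
    inv (m + 1) a b k c d f g (m + 1) (m + 1) = k m * b m / (k (m + 1) * c m * c (m + 1)) := by
  rw [inv, if_neg (by omega), if_neg (by omega), if_pos rfl, if_neg (by omega), if_pos rfl,
    Nat.add_sub_cancel]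

theorem inv_self_of_lt (hm : 1 ≤ m) (hmn : m + 1 ≠ n) :
    inv n a b k c d f g (m + 1) (m + 1) = (k m * b m - k (m + 2) * a m) / (c m * c (m + 1)) := by
  rw [inv, if_neg (by omega), if_neg (by omega), if_pos rfl, if_neg (by omega), if_neg hmn,
    Nat.add_sub_cancel]

theorem inv_lower (h : l + 1 < i) :
    inv n a b k c d f g i (l + 1) = d l * weight k c f g i (l + 1) / c l := by
  have hIco : Icc (l + 2) (i - 1) = Ico (l + 2) i := by ext; simp; omega
  rw [inv, if_neg (by omega), if_neg (by omega), if_neg (by omega), Nat.add_sub_cancel, hIco,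
    weight, Icc_eq_cons_Ioc (by omega : l ≤ i), prod_cons, ← Icc_add_one_left_eq_Ioc]
  ring

theorem weight_eq (h : l + 1 < i) :
    weight k c f g i l = -(k (l + 1) * f (l + 1)) * weight k c f g i (l + 1) / c l := by
  rw [weight, weight, prod_eq_prod_Ico_succ_bot h, Icc_eq_cons_Ioc (by omega : l ≤ i), prod_cons,
    ← Icc_add_one_left_eq_Ioc, ← add_assoc, pow_succ]
  ring

theorem weight_pred : weight k c f g (m + 1) m = -(g (m + 1) / (c m * c (m + 1))) := by
  rw [weight, Ico_self, prod_empty, Icc_eq_cons_Ioc (by omega), prod_cons,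
    Nat.Ioc_succ_singleton, prod_singleton, Odd.neg_one_pow ⟨m, by ring⟩]
  ring

theorem inv_lower_eq_sub (h : l + 1 < i) (hcl : c l ≠ 0)
    (hd : d l = a (l + 1) * c l + a l * (k (l + 1) * f (l + 1))) :
    inv n a b k c d f g i (l + 1) =
      a (l + 1) * weight k c f g i (l + 1) - a l * weight k c f g i l := by
  rw [inv_lower h, weight_eq h, hd]
  field_simp
  ring

theorem k_mul_inv_lower_eq_sub (h : l + 1 < i) (hcl : c l ≠ 0)
    (hd : d l = b (l + 1) * c l + k l * b l * f (l + 1)) :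
    k (l + 1) * inv n a b k c d f g i (l + 1) =
      k (l + 1) * b (l + 1) * weight k c f g i (l + 1) - k l * b l * weight k c f g i l := by
  rw [inv_lower h, weight_eq h, hd]
  field_simp
  ring

structure Assumptions (n : ℕ) (a b k c d f g : ℕ → F) : Prop where
  c_zero : c 0 = 1
  c_eq : ∀ i, 1 ≤ i → i ≤ n - 1 → c i = k i * b i - k (i + 1) * a i
  c_last : c n = b n
  d_zero : d 0 = a 1
  d_eq : ∀ i, 1 ≤ i → i ≤ n - 2 →
    d i = k i * a (i + 1) * b i - k (i + 1) * a i * b (i + 1)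
  f_eq : ∀ i, 2 ≤ i → i ≤ n - 1 → f i = a i - b i
  g_eq : ∀ i, 2 ≤ i → i ≤ n - 1 → g i = k i - k (i + 1)
  g_last : g n = 1
  k_last_ne : k n ≠ 0
  c_ne : ∀ i, 1 ≤ i → i ≤ n → c i ≠ 0

namespace Assumptions

theorem c_ne_zero (h : Assumptions n a b k c d f g) (hl : l ≤ n) : c l ≠ 0 := by
  rcases Nat.eq_zero_or_pos l with rfl | hl0
  · simp [h.c_zero]
  · exact h.c_ne l hl0 hl

theorem d_eq_a (h : Assumptions n a b k c d f g) (hl : 1 ≤ l) (hln : l + 2 ≤ n) :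
    d l = a (l + 1) * c l + a l * (k (l + 1) * f (l + 1)) := by
  rw [h.d_eq l hl (by omega), h.c_eq l hl (by omega), h.f_eq (l + 1) (by omega) (by omega)]
  ring

theorem d_eq_b (h : Assumptions n a b k c d f g) (hl : 1 ≤ l) (hln : l + 2 ≤ n) :
    d l = b (l + 1) * c l + k l * b l * f (l + 1) := by
  rw [h.d_eq l hl (by omega), h.c_eq l hl (by omega), h.f_eq (l + 1) (by omega) (by omega)]
  ring

theorem sum_range_inv (h : Assumptions n a b k c d f g) (hj : 1 ≤ j) (hji : j < i)
    (hin : i ≤ n) :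
    ∑ l ∈ range j, inv n a b k c d f g i (l + 1) = a j * weight k c f g i j := by
  obtain ⟨m, rfl⟩ : ∃ m, j = m + 1 := ⟨j - 1, by omega⟩
  have htel : ∀ l ∈ range m, inv n a b k c d f g i (l + 1 + 1) =
      a (l + 2) * weight k c f g i (l + 2) - a (l + 1) * weight k c f g i (l + 1) := by
    intro l hl
    rw [mem_range] at hl
    exact inv_lower_eq_sub (by omega) (h.c_ne_zero (by omega)) (h.d_eq_a (by omega) (by omega))
  rw [sum_range_succ', sum_congr rfl htel,
    sum_range_sub (fun l => a (l + 1) * weight k c f g i (l + 1)), inv_lower (by omega),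
    h.c_zero, h.d_zero]
  ring

theorem sum_Ico_k_mul_inv_self (h : Assumptions n a b k c d f g) (hm : 1 ≤ m)
    (hmn : m + 1 ≤ n) :
    ∑ l ∈ Ico m n, k (l + 1) * inv n a b k c d f g (m + 1) (l + 1) =
      -(k m * b m * weight k c f g (m + 1) m) := by
  have hcm := h.c_ne_zero (l := m) (by omega)
  have hcm' := h.c_ne_zero (l := m + 1) hmn
  rw [weight_pred]
  rcases hmn.eq_or_lt with hlast | hmid
  · subst hlast
    rw [Nat.Ico_succ_singleton, sum_singleton, inv_self_last hm, h.g_last]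
    field_simp [h.k_last_ne]
  · rw [sum_eq_sum_Ico_succ_bot (by omega), sum_eq_sum_Ico_succ_bot (by omega),
      sum_eq_zero fun l hl => by rw [mem_Ico] at hl; rw [inv_eq_zero (by omega), mul_zero],
      inv_self_of_lt hm (by omega), inv_succ, h.g_eq (m + 1) (by omega) (by omega)]
    field_simp
    rw [h.c_eq m hm (by omega)]
    ring

theorem sum_Ico_k_mul_inv (h : Assumptions n a b k c d f g) (hj : 1 ≤ j) (hji : j < i)
    (hin : i ≤ n) :
    ∑ l ∈ Ico j n, k (l + 1) * inv n a b k c d f g i (l + 1) =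
      -(k j * b j * weight k c f g i j) := by
  obtain ⟨m, rfl⟩ : ∃ m, i = m + 1 := ⟨i - 1, by omega⟩
  have htel : ∀ l ∈ Ico j m, k (l + 1) * inv n a b k c d f g (m + 1) (l + 1) =
      k (l + 1) * b (l + 1) * weight k c f g (m + 1) (l + 1) -
        k l * b l * weight k c f g (m + 1) l := by
    intro l hl
    rw [mem_Ico] at hl
    exact k_mul_inv_lower_eq_sub (by omega) (h.c_ne_zero (by omega))
      (h.d_eq_b (by omega) (by omega))
  rw [← sum_Ico_consecutive _ (by omega : j ≤ m) (by omega : m ≤ n), sum_congr rfl htel,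
    sum_Ico_sub (fun l => k l * b l * weight k c f g (m + 1) l) (by omega),
    h.sum_Ico_k_mul_inv_self (by omega) hin]
  ring

theorem sum_range_inv_self (h : Assumptions n a b k c d f g) (hi : 1 ≤ i) (hin : i < n) :
    ∑ l ∈ range i, inv n a b k c d f g i (l + 1) = 1 / c i := by
  obtain ⟨m, rfl⟩ : ∃ m, i = m + 1 := ⟨i - 1, by omega⟩
  rcases Nat.eq_zero_or_pos m with rfl | hm
  · rw [sum_range_one, inv_one_one]
  have hcm := h.c_ne_zero (l := m) (by omega)
  have hcm' := h.c_ne_zero (l := m + 1) hin.le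
  rw [sum_range_succ, h.sum_range_inv hm (by omega) hin.le, inv_self_of_lt hm (by omega),
    weight_pred, h.g_eq (m + 1) (by omega) (by omega)]
  field_simp
  rw [h.c_eq m hm (by omega)]
  ring

theorem sum_range_inv_last (h : Assumptions n a b k c d f g) (hn : 2 ≤ n) :
    ∑ l ∈ range n, inv n a b k c d f g n (l + 1) = 1 / (k n * c n) := by
  obtain ⟨m, rfl⟩ : ∃ m, n = m + 1 := ⟨n - 1, by omega⟩
  have hcm := h.c_ne_zero (l := m) (by omega)
  have hcm' := h.c_ne_zero (l := m + 1) le_rfl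
  rw [sum_range_succ, h.sum_range_inv (by omega) (by omega) le_rfl, inv_self_last (by omega),
    weight_pred, h.g_last]
  field_simp [h.k_last_ne]
  rw [h.c_eq m (by omega) (by omega)]
  ring

theorem sum_inv_mul_mat (h : Assumptions n a b k c d f g) (hn : 2 ≤ n) (hi : 1 ≤ i)
    (hin : i ≤ n) (hj : 1 ≤ j) (hjn : j ≤ n) :
    ∑ l ∈ range n, inv n a b k c d f g i (l + 1) * mat a b k (l + 1) j =
      if i = j then 1 else 0 := by
  rw [sum_mul_mat _ hjn]
  rcases lt_trichotomy j i with hji | rfl | hij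
  · rw [h.sum_range_inv hj hji hin, h.sum_Ico_k_mul_inv hj hji hin, if_neg (by omega)]
    ring
  · rw [if_pos rfl]
    rcases hjn.eq_or_lt with rfl | hjn
    · have hbn : b j ≠ 0 := h.c_last ▸ h.c_ne_zero le_rfl
      rw [h.sum_range_inv_last hn, Ico_self, sum_empty, mul_zero, add_zero, h.c_last]
      field_simp [h.k_last_ne]
    · have hcj := h.c_ne_zero (l := j) hjn.le
      rw [h.sum_range_inv_self hj hjn, sum_eq_single_of_mem j (by simp [hjn]), inv_succ]
      · field_simp
        rw [h.c_eq j hj (by omega)]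
        ring
      · intro l hl hlj
        rw [mem_Ico] at hl
        rw [inv_eq_zero (by omega), mul_zero]
  · rw [if_neg (by omega), ← sum_range_add_sum_Ico _ (by omega : i + 1 ≤ j), sum_range_succ,
      h.sum_range_inv_self hi (by omega), inv_succ, neg_div, add_neg_cancel, zero_add,
      sum_eq_zero, sum_eq_zero]
    · ring
    · intro l hl
      rw [mem_Ico] at hl
      rw [inv_eq_zero (by omega), mul_zero]
    · intro l hl
      rw [mem_Ico] at hl
      exact inv_eq_zero (by omega)

end Assumptions

end Brownian

/-- With `A₂` the Brownian-type matrix `(A₂)_{ij} = kⱼbⱼ (i ≤ j)`,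
`kᵢaⱼ (i > j)` (1-based), and `B` the lower Hessenberg matrix of formulae (8),
assuming `kₙ ≠ 0` and `cᵢ ≠ 0` for `i = 1,…,n`, we have `B * A₂ = 1`. -/
theorem stmt_11 {F : Type*} [Field F] {n : ℕ} (hn : 3 ≤ n)
    (a b k c d f g : ℕ → F)
    (A₂ B : Matrix (Fin n) (Fin n) F)
    (hA : ∀ i j : Fin n, A₂ i j =
      if (i : ℕ) ≤ (j : ℕ) then k ((j : ℕ) + 1) * b ((j : ℕ) + 1)
      else k ((i : ℕ) + 1) * a ((j : ℕ) + 1))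
    (hc0 : c 0 = 1)
    (hc : ∀ i : ℕ, 1 ≤ i → i ≤ n - 1 → c i = k i * b i - k (i + 1) * a i)
    (hcn : c n = b n)
    (hd0 : d 0 = a 1)
    (hd : ∀ i : ℕ, 1 ≤ i → i ≤ n - 2 →
      d i = k i * a (i + 1) * b i - k (i + 1) * a i * b (i + 1))
    (hf : ∀ i : ℕ, 2 ≤ i → i ≤ n - 1 → f i = a i - b i)
    (hg : ∀ i : ℕ, 2 ≤ i → i ≤ n - 1 → g i = k i - k (i + 1))
    (hgn : g n = 1)
    (hB : ∀ i j : Fin n, B i j =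
      if ((j : ℕ) + 1) > ((i : ℕ) + 1) + 1 then 0
      else if ((j : ℕ) + 1) = ((i : ℕ) + 1) + 1 then -1 / c ((i : ℕ) + 1)
      else if (i : ℕ) = (j : ℕ) then
        (if (i : ℕ) + 1 = 1 then 1 / c 1
         else if (i : ℕ) + 1 = n then k (n - 1) * b (n - 1) / (k n * c (n - 1) * c n)
         else (k (i : ℕ) * b (i : ℕ) - k ((i : ℕ) + 2) * a (i : ℕ)) /
           (c (i : ℕ) * c ((i : ℕ) + 1)))
      else (-1 : F) ^ (((i : ℕ) + 1) + ((j : ℕ) + 1)) * d (j : ℕ) * g ((i : ℕ) + 1) *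
        (∏ ν ∈ Finset.Icc ((j : ℕ) + 2) (i : ℕ), k ν * f ν) /
        ∏ ν ∈ Finset.Icc (j : ℕ) ((i : ℕ) + 1), c ν)
    (hkn : k n ≠ 0)
    (hcne : ∀ i : ℕ, 1 ≤ i → i ≤ n → c i ≠ 0) :
    B * A₂ = 1 := by
  have h : Brownian.Assumptions n a b k c d f g :=
    ⟨hc0, hc, hcn, hd0, hd, hf, hg, hgn, hkn, hcne⟩
  ext i j
  have hB' : ∀ l : Fin n, B i l = Brownian.inv n a b k c d f g (i + 1) (l + 1) := by
    intro l
    rw [hB, Brownian.inv]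
    simp only [gt_iff_lt, Nat.add_sub_cancel, Nat.add_right_cancel_iff]
  have hA' : ∀ l : Fin n, A₂ l j = Brownian.mat a b k (l + 1) (j + 1) := by
    intro l
    simp only [hA, Brownian.mat, Nat.add_le_add_iff_right]
  rw [Matrix.mul_apply, Matrix.one_apply, Fintype.sum_congr _ _ fun l => by rw [hB', hA'],
    Fin.sum_univ_eq_sum_range (fun l => Brownian.inv n a b k c d f g (i + 1) (l + 1) *
      Brownian.mat a b k (l + 1) (j + 1)) n,
    h.sum_inv_mul_mat (by omega) (by omega) (by omega) (by omega) (by omega)]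
  simp [Fin.ext_iff]
end

section
/- The determinant of A_2 equals k_n · b_n · ∏_{i=1}^{n−1} (k_i b_i − k_{i+1} a_i). -/
/-!
Subtracting row `i + 1` from row `i` for every `i < n - 1` (left multiplication by a unipotent
upper triangular matrix) does not change the determinant. On and above the diagonal the entries
of `A₂` depend only on the column, so these differences vanish above the diagonal: the result is
lower triangular, with diagonal entries `kᵢ bᵢ - kᵢ₊₁ aᵢ` and, in the last row, `kₙ bₙ`.
-/

namespace Matrix

variable {R : Type*} [CommRing R]

variable (R) in
def superdiagonalOnes (n : ℕ) : Matrix (Fin n) (Fin n) R :=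
  of fun i j => if (j : ℕ) = i + 1 then 1 else 0

theorem superdiagonalOnes_mul_apply {n : ℕ} (M : Matrix (Fin n) (Fin n) R) (i j : Fin n) :
    (superdiagonalOnes R n * M) i j = if h : (i : ℕ) + 1 < n then M ⟨i + 1, h⟩ j else 0 := by
  simp only [superdiagonalOnes, mul_apply, of_apply, ite_mul, one_mul, zero_mul]
  split_ifs with h
  · rw [Finset.sum_eq_single ⟨i + 1, h⟩] <;> simp +contextual [Fin.ext_iff]
  · exact Finset.sum_eq_zero fun l _ => if_neg (by omega)

theorem det_one_sub_superdiagonalOnes (n : ℕ) : det (1 - superdiagonalOnes R n) = 1 := by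
  rw [det_of_isUpperTriangular]
  · simp [superdiagonalOnes]
  · intro i j hij
    have hij : (j : ℕ) < i := hij
    simp [superdiagonalOnes, Fin.ext_iff, hij.ne', show (j : ℕ) ≠ i + 1 by omega]

theorem det_of_forall_le_apply_eq {m : ℕ} (M : Matrix (Fin (m + 1)) (Fin (m + 1)) R)
    (u : Fin (m + 1) → R) (hM : ∀ i j, i ≤ j → M i j = u j) :
    M.det = u (Fin.last m) * ∏ i : Fin m, (u i.castSucc - M i.succ i.castSucc) := by
  set D := (1 - superdiagonalOnes R (m + 1)) * M with hD
  have hD_apply : ∀ i j, D i j = M i j - if h : (i : ℕ) + 1 < m + 1 then M ⟨i + 1, h⟩ j else 0 := by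
    intro i j
    rw [hD, sub_mul, one_mul, sub_apply, superdiagonalOnes_mul_apply]
  have hD_lower : D.IsLowerTriangular := by
    intro i j hij
    have hij : (i : ℕ) < j := hij
    rw [hD_apply, dif_pos (by omega), hM _ _ hij.le, hM _ _ (Fin.mk_le_of_le_val (by omega)), sub_self]
  calc M.det = D.det := by rw [hD, det_mul, det_one_sub_superdiagonalOnes, one_mul]
    _ = ∏ i, D i i := det_of_isLowerTriangular D hD_lower
    _ = _ := by
      rw [Fin.prod_univ_castSucc, mul_comm]
      congr 1
      · simp [hD_apply, hM]
      · refine Finset.prod_congr rfl fun i _ => ?_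
        rw [hD_apply, dif_pos (by simp), hM _ _ le_rfl]
        rfl

end Matrix

theorem Fin.prod_univ_eq_prod_Icc_one {M : Type*} [CommMonoid M] (f : ℕ → M) (m : ℕ) :
    ∏ i : Fin m, f (i + 1) = ∏ i ∈ Finset.Icc 1 m, f i := by
  rw [Fin.prod_univ_eq_prod_range (fun i => f (i + 1)), Finset.range_eq_Ico, Finset.prod_Ico_add' f,
    ← Finset.Ico_add_one_right_eq_Icc, zero_add]

/-- `det A₂ = kₙ bₙ ∏_{i=1}^{n-1} (kᵢ bᵢ - k_{i+1} aᵢ)`. -/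
theorem stmt_12 {F : Type*} [Field F] {n : ℕ} (hn : 2 ≤ n)
    (a b k : ℕ → F)
    (A₂ : Matrix (Fin n) (Fin n) F)
    (hA : ∀ i j : Fin n, A₂ i j =
      if (i : ℕ) ≤ (j : ℕ) then k ((j : ℕ) + 1) * b ((j : ℕ) + 1)
      else k ((i : ℕ) + 1) * a ((j : ℕ) + 1)) :
    A₂.det = k n * b n * ∏ i ∈ Finset.Icc 1 (n - 1), (k i * b i - k (i + 1) * a i) := by
  obtain ⟨m, rfl⟩ : ∃ m, n = m + 1 := ⟨n - 1, by omega⟩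
  have h_upper (i j : Fin (m + 1)) (hij : i ≤ j) : A₂ i j = k (j + 1) * b (j + 1) := by
    rw [hA, if_pos (Fin.le_def.mp hij)]
  have h_subdiag (i : Fin m) : A₂ i.succ i.castSucc = k (i + 1 + 1) * a (i + 1) := by
    rw [hA, if_neg (by simp)]
    rfl
  rw [A₂.det_of_forall_le_apply_eq _ h_upper, Nat.add_sub_cancel,
    ← Fin.prod_univ_eq_prod_Icc_one (fun i => k i * b i - k (i + 1) * a i)]
  simp only [Fin.val_last, Fin.val_castSucc, h_subdiag]
end

section
/- The matrix A_2 is invertible if and only if k_n ≠ 0, b_n ≠ 0, and k_i b_i − k_{i+1} a_i ≠ 0 for every i with 1 ≤ i ≤ n−1. -/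
/-!
Subtracting row `i + 1` from row `i`, for every `i` at once, is left multiplication by the unit
upper triangular matrix `1 - shiftUp n`, so it preserves the determinant. Applied to `A₂`, it kills
everything above the diagonal, because above the diagonal consecutive rows of `A₂` agree. The
resulting lower triangular matrix has diagonal `kᵢ bᵢ - kᵢ₊₁ aᵢ` (`i < n`) and `kₙ bₙ`, and `A₂` is
invertible iff the product of these is nonzero.
-/

open Finset

namespace Matrix

section ShiftUp

variable {R : Type*} [CommRing R] {n : ℕ}

def shiftUp (n : ℕ) : Matrix (Fin n) (Fin n) R :=
  of fun i j => if (j : ℕ) = i + 1 then 1 else 0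

theorem shiftUp_mul_apply (M : Matrix (Fin n) (Fin n) R) (i j : Fin n) :
    (shiftUp n * M : Matrix (Fin n) (Fin n) R) i j = if h : (i : ℕ) + 1 < n then M ⟨i + 1, h⟩ j else 0 := by
  rw [mul_apply]
  split_ifs with h
  · rw [sum_eq_single ⟨i + 1, h⟩]
    · simp [shiftUp]
    · intro l _ hl
      simp [shiftUp, Fin.ext_iff.not.mp hl]
    · simp
  · refine sum_eq_zero fun l _ => ?_
    simp [shiftUp, show (l : ℕ) ≠ i + 1 by omega]

theorem one_sub_shiftUp_mul_apply (M : Matrix (Fin n) (Fin n) R) (i j : Fin n) :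
    ((1 - shiftUp n) * M : Matrix (Fin n) (Fin n) R) i j = M i j - if h : (i : ℕ) + 1 < n then M ⟨i + 1, h⟩ j else 0 := by
  rw [sub_mul, one_mul, sub_apply, shiftUp_mul_apply]

theorem det_one_sub_shiftUp : (1 - shiftUp n : Matrix (Fin n) (Fin n) R).det = 1 := by
  rw [det_of_isUpperTriangular]
  · exact prod_eq_one fun i _ => by simp [shiftUp]
  · intro i j (hji : (j : ℕ) < i)
    simp [shiftUp, Fin.ext_iff, show (i : ℕ) ≠ j by omega, show (j : ℕ) ≠ i + 1 by omega]

theorem det_one_sub_shiftUp_mul (M : Matrix (Fin n) (Fin n) R) :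
    ((1 - shiftUp n) * M : Matrix (Fin n) (Fin n) R).det = M.det := by
  rw [det_mul, det_one_sub_shiftUp, one_mul]

end ShiftUp

section ABK

variable {F : Type*} [Field F] (a b k : ℕ → F)

/-- The paper's `A₂`. The sequences `a`, `b`, `k` are indexed from `1` as in the paper, the rows
and columns from `0`. -/
def abkMatrix (n : ℕ) : Matrix (Fin n) (Fin n) F :=
  of fun i j => if (i : ℕ) ≤ j then k (j + 1) * b (j + 1) else k (i + 1) * a (j + 1)

theorem isLowerTriangular_one_sub_shiftUp_mul_abkMatrix (n : ℕ) :
    ((1 - shiftUp n) * abkMatrix a b k n).IsLowerTriangular := by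
  intro i j (hij : (i : ℕ) < j)
  rw [one_sub_shiftUp_mul_apply, dif_pos (by omega)]
  simp only [abkMatrix, of_apply]
  rw [if_pos hij.le, if_pos (Nat.succ_le_of_lt hij), sub_self]

theorem det_abkMatrix_succ (n : ℕ) :
    (abkMatrix a b k (n + 1)).det =
      (∏ i ∈ Ico 1 (n + 1), (k i * b i - k (i + 1) * a i)) * (k (n + 1) * b (n + 1)) := by
  rw [← det_one_sub_shiftUp_mul, det_of_isLowerTriangular _
    (isLowerTriangular_one_sub_shiftUp_mul_abkMatrix a b k _), Fin.prod_univ_castSucc,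
    prod_Ico_eq_prod_range, Nat.add_sub_cancel, ← Fin.prod_univ_eq_prod_range]
  congr 1
  · refine prod_congr rfl fun i _ => ?_
    rw [one_sub_shiftUp_mul_apply, dif_pos (by simp)]
    simp only [abkMatrix, of_apply, Fin.val_castSucc, le_refl, if_true]
    rw [if_neg (by omega)]
    ring_nf
  · rw [one_sub_shiftUp_mul_apply, dif_neg (by simp)]
    simp [abkMatrix]

end ABK

end Matrix

open Matrix in
/-- `A₂` is invertible iff `kₙ ≠ 0`, `bₙ ≠ 0`, and
`kᵢ bᵢ - k_{i+1} aᵢ ≠ 0` for `1 ≤ i ≤ n-1`. -/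
theorem stmt_13 {F : Type*} [Field F] {n : ℕ} (hn : 2 ≤ n)
    (a b k : ℕ → F)
    (A₂ : Matrix (Fin n) (Fin n) F)
    (hA : ∀ i j : Fin n, A₂ i j =
      if (i : ℕ) ≤ (j : ℕ) then k ((j : ℕ) + 1) * b ((j : ℕ) + 1)
      else k ((i : ℕ) + 1) * a ((j : ℕ) + 1)) :
    IsUnit A₂ ↔
      (k n ≠ 0 ∧ b n ≠ 0 ∧ ∀ i : ℕ, 1 ≤ i → i ≤ n - 1 → k i * b i - k (i + 1) * a i ≠ 0) := by
  obtain ⟨m, rfl⟩ : ∃ m, n = m + 1 := ⟨n - 1, by omega⟩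
  have hA₂ : A₂ = abkMatrix a b k (m + 1) := ext hA
  rw [hA₂, isUnit_iff_isUnit_det, isUnit_iff_ne_zero, det_abkMatrix_succ, mul_ne_zero_iff,
    mul_ne_zero_iff, prod_ne_zero_iff, Nat.add_sub_cancel]
  simp only [mem_Ico, Nat.lt_succ_iff]
  tauto
end

section
/- Assume k_n ≠ 0, b_n ≠ 0, and k_i b_i − k_{i+1} a_i ≠ 0 for 1 ≤ i ≤ n−1, so that A_2 is invertible. Then the inverse A_2^{−1} is a lower Hessenberg matrix: (A_2^{−1})_{ij} = 0 whenever j − i > 1. -/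
/-!
Subtracting from each row of `A₂` the row below it, i.e. multiplying on the left by the
unipotent upper bidiagonal matrix `T = 1 - S` (`S` the superdiagonal shift), cancels the part
above the diagonal, since there the entries depend only on the column. So `T A₂` is lower
triangular with diagonal entries `kᵢ bᵢ - kᵢ₊₁ aᵢ` and `kₙ bₙ`, which makes `A₂` invertible,
and `A₂⁻¹ = (T A₂)⁻¹ T` is a lower triangular matrix times an upper bidiagonal one.
-/

namespace Matrix

variable {R : Type*} {n : ℕ}

def IsLowerHessenberg [Zero R] (A : Matrix (Fin n) (Fin n) R) : Prop :=
  ∀ i j : Fin n, (i : ℕ) + 1 < j → A i j = 0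

theorem IsLowerHessenberg.lowerTriangular_mul [NonUnitalNonAssocSemiring R]
    {L H : Matrix (Fin n) (Fin n) R} (hH : H.IsLowerHessenberg) (hL : L.IsLowerTriangular) :
    (L * H).IsLowerHessenberg := by
  intro i j hij
  rw [mul_apply]
  refine Finset.sum_eq_zero fun l _ => ?_
  rcases lt_or_ge i l with h | h
  · rw [hL h, zero_mul]
  · rw [hH l j (by omega), mul_zero]

theorem isLowerHessenberg_inv_of_isLowerTriangular_mul [CommRing R]
    {T A : Matrix (Fin n) (Fin n) R} (hT : IsUnit T.det) (hTH : T.IsLowerHessenberg)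
    (hTA : (T * A).IsLowerTriangular) (hA : IsUnit A.det) : A⁻¹.IsLowerHessenberg := by
  have : Invertible (T * A) := invertibleOfIsUnitDet _ (by rw [det_mul]; exact hT.mul hA)
  have hinv : A⁻¹ = (T * A)⁻¹ * T := by
    rw [mul_inv_rev, Matrix.mul_assoc, nonsing_inv_mul T hT, Matrix.mul_one]
  exact hinv ▸ hTH.lowerTriangular_mul (blockTriangular_inv_of_blockTriangular hTA)

def upShift [Zero R] [One R] : Matrix (Fin n) (Fin n) R :=
  of fun i j => if (j : ℕ) = i + 1 then 1 else 0

section upShift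

variable [Ring R]

theorem upShift_mul_apply_of_lt (A : Matrix (Fin n) (Fin n) R) {i : Fin n} (hi : (i : ℕ) + 1 < n)
    (j : Fin n) : ((upShift : Matrix (Fin n) (Fin n) R) * A) i j = A ⟨i + 1, hi⟩ j := by
  rw [mul_apply, Finset.sum_eq_single ⟨i + 1, hi⟩]
  · simp [upShift]
  · intro l _ hl
    simp [upShift, Fin.ext_iff.not.mp hl]
  · simp

theorem upShift_mul_apply_of_add_one_eq (A : Matrix (Fin n) (Fin n) R) {i : Fin n}
    (hi : (i : ℕ) + 1 = n) (j : Fin n) : ((upShift : Matrix (Fin n) (Fin n) R) * A) i j = 0 :=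
  (mul_apply ..).trans <|
  Finset.sum_eq_zero fun l _ => by simp [upShift]; omega


theorem isLowerHessenberg_one_sub_upShift :
    (1 - upShift : Matrix (Fin n) (Fin n) R).IsLowerHessenberg := fun i j hij => by
  simp only [sub_apply, upShift, of_apply, one_apply, Fin.ext_iff]
  rw [if_neg (by omega), if_neg (by omega), sub_zero]

end upShift

theorem det_one_sub_upShift [CommRing R] : (1 - upShift : Matrix (Fin n) (Fin n) R).det = 1 := by
  have hU : (upShift : Matrix (Fin n) (Fin n) R).IsUpperTriangular := fun i j (hij : j < i) => by
    simp [upShift]; omega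
  rw [det_of_isUpperTriangular (blockTriangular_one.sub hU)]
  simp [upShift]

section semiseparable

variable [CommRing R] {a b k : ℕ → R}

-- Indices are shifted by one: entry `(i, j)` of `Fin n` is the paper's entry `(i + 1, j + 1)`.
def semiseparable (a b k : ℕ → R) : Matrix (Fin n) (Fin n) R :=
  of fun i j => if (i : ℕ) ≤ j then k (j + 1) * b (j + 1) else k (i + 1) * a (j + 1)

theorem isLowerTriangular_one_sub_upShift_mul_semiseparable :
    ((1 - upShift) * semiseparable a b k : Matrix (Fin n) (Fin n) R).IsLowerTriangular :=
  fun i j (hij : i < j) => by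
    rw [sub_mul, Matrix.one_mul, sub_apply, upShift_mul_apply_of_lt _ (by omega)]
    simp only [semiseparable, of_apply]
    rw [if_pos (by omega), if_pos (by omega), sub_self]

theorem one_sub_upShift_mul_semiseparable_apply_self_of_lt {i : Fin n} (hi : (i : ℕ) + 1 < n) :
    ((1 - upShift) * semiseparable a b k : Matrix (Fin n) (Fin n) R) i i =
      k (i + 1) * b (i + 1) - k (i + 2) * a (i + 1) := by
  rw [sub_mul, Matrix.one_mul, sub_apply, upShift_mul_apply_of_lt _ hi]
  simp only [semiseparable, of_apply, le_refl, if_true]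
  rw [if_neg (by simp)]

theorem one_sub_upShift_mul_semiseparable_apply_self_of_add_one_eq {i : Fin n}
    (hi : (i : ℕ) + 1 = n) :
    ((1 - upShift) * semiseparable a b k : Matrix (Fin n) (Fin n) R) i i = k n * b n := by
  rw [sub_mul, Matrix.one_mul, sub_apply, upShift_mul_apply_of_add_one_eq _ hi]
  simp [semiseparable, hi]

theorem det_semiseparable_ne_zero [IsDomain R] (hkn : k n ≠ 0) (hbn : b n ≠ 0)
    (hc : ∀ i : ℕ, 1 ≤ i → i ≤ n - 1 → k i * b i - k (i + 1) * a i ≠ 0) :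
    (semiseparable a b k : Matrix (Fin n) (Fin n) R).det ≠ 0 := by
  have hdet := det_mul (1 - upShift) (semiseparable a b k : Matrix (Fin n) (Fin n) R)
  rw [det_one_sub_upShift, one_mul] at hdet
  rw [← hdet, det_of_isLowerTriangular _ isLowerTriangular_one_sub_upShift_mul_semiseparable,
    Finset.prod_ne_zero_iff]
  intro i _
  rcases (Nat.succ_le_of_lt i.isLt).lt_or_eq with hi | hi
  · rw [one_sub_upShift_mul_semiseparable_apply_self_of_lt hi]
    exact hc (i + 1) (by omega) (by omega)
  · rw [one_sub_upShift_mul_semiseparable_apply_self_of_add_one_eq hi]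
    exact mul_ne_zero hkn hbn

end semiseparable

end Matrix

theorem stmt_14_general {F : Type*} [Field F] {n : ℕ}
    (a b k : ℕ → F)
    (A₂ : Matrix (Fin n) (Fin n) F)
    (hA : ∀ i j : Fin n, A₂ i j =
      if (i : ℕ) ≤ (j : ℕ) then k ((j : ℕ) + 1) * b ((j : ℕ) + 1)
      else k ((i : ℕ) + 1) * a ((j : ℕ) + 1))
    (hkn : k n ≠ 0) (hbn : b n ≠ 0)
    (hc : ∀ i : ℕ, 1 ≤ i → i ≤ n - 1 → k i * b i - k (i + 1) * a i ≠ 0) :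
    ∀ i j : Fin n, (j : ℕ) > (i : ℕ) + 1 → A₂⁻¹ i j = 0 := by
  obtain rfl : A₂ = Matrix.semiseparable a b k := Matrix.ext hA
  exact Matrix.isLowerHessenberg_inv_of_isLowerTriangular_mul
    (by rw [Matrix.det_one_sub_upShift]; exact isUnit_one)
    Matrix.isLowerHessenberg_one_sub_upShift
    Matrix.isLowerTriangular_one_sub_upShift_mul_semiseparable
    (Matrix.det_semiseparable_ne_zero hkn hbn hc).isUnit

/-- If `kₙ ≠ 0`, `bₙ ≠ 0`, and `kᵢ bᵢ - k_{i+1} aᵢ ≠ 0` for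
`1 ≤ i ≤ n-1`, then `A₂⁻¹` is lower Hessenberg: `(A₂⁻¹)_{ij} = 0` for `j - i > 1`. -/
theorem stmt_14 {F : Type*} [Field F] {n : ℕ} (hn : 2 ≤ n)
    (a b k : ℕ → F)
    (A₂ : Matrix (Fin n) (Fin n) F)
    (hA : ∀ i j : Fin n, A₂ i j =
      if (i : ℕ) ≤ (j : ℕ) then k ((j : ℕ) + 1) * b ((j : ℕ) + 1)
      else k ((i : ℕ) + 1) * a ((j : ℕ) + 1))
    (hkn : k n ≠ 0) (hbn : b n ≠ 0)
    (hc : ∀ i : ℕ, 1 ≤ i → i ≤ n - 1 → k i * b i - k (i + 1) * a i ≠ 0) :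
    ∀ i j : Fin n, (j : ℕ) > (i : ℕ) + 1 → A₂⁻¹ i j = 0 :=
  stmt_14_general a b k A₂ hA hkn hbn hc
end

section
/- Let E be the n×n upper bidiagonal matrix with E_{ii} = 1 for all i, E_{i,i+1} = −1 for 1 ≤ i ≤ n−1, and all other entries 0. Then E · A_2 is the lower triangular matrix T with: T_{ii} = k_i b_i − k_{i+1} a_i for 1 ≤ i ≤ n−1, T_{nn} = k_n b_n, T_{ij} = a_j (k_i − k_{i+1}) for 1 ≤ j < i ≤ n−1, T_{nj} = k_n a_j for 1 ≤ j ≤ n−1, and T_{ij} = 0 for j > i. -/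
/-!
Left multiplication by `E` replaces each row of `A₂` but the last by its difference with the
next row. Above the diagonal, rows `i` and `i + 1` of `A₂` both have entry `k_j b_j` in column
`j`, so the difference vanishes there; the remaining entries are read off directly.
-/

theorem Fin.sum_ite_val_eq {M : Type*} [AddCommMonoid M] {n : ℕ} (m : ℕ) (f : Fin n → M) :
    (∑ l : Fin n, if (l : ℕ) = m then f l else 0) = if h : m < n then f ⟨m, h⟩ else 0 := by
  split_ifs with h
  · rw [Finset.sum_eq_single ⟨m, h⟩ (fun l _ hl => if_neg fun hlm => hl (Fin.ext hlm)) (by simp)]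
    simp
  · exact Finset.sum_eq_zero fun l _ => if_neg (by omega)

theorem Matrix.mul_apply_of_upper_bidiagonal {R : Type*} [Ring R] {n : ℕ}
    (E M : Matrix (Fin n) (Fin n) R)
    (hE : ∀ i j : Fin n, E i j = if i = j then 1 else if (j : ℕ) = (i : ℕ) + 1 then -1 else 0)
    (i j : Fin n) :
    (E * M) i j = M i j - if h : (i : ℕ) + 1 < n then M ⟨i + 1, h⟩ j else 0 := by
  have hrow : ∀ l, E i l * M l j =
      (if i = l then M l j else 0) - if (l : ℕ) = i + 1 then M l j else 0 := by
    intro l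
    rw [hE]
    split_ifs <;> first | omega | simp
  simp only [mul_apply, hrow, Finset.sum_sub_distrib, Finset.sum_ite_eq, Finset.mem_univ,
    if_true, Fin.sum_ite_val_eq]

theorem stmt_15_general {F : Type*} [Field F] {n : ℕ}
    (a b k : ℕ → F)
    (A₂ E T : Matrix (Fin n) (Fin n) F)
    (hA : ∀ i j : Fin n, A₂ i j =
      if (i : ℕ) ≤ (j : ℕ) then k ((j : ℕ) + 1) * b ((j : ℕ) + 1)
      else k ((i : ℕ) + 1) * a ((j : ℕ) + 1))
    (hE : ∀ i j : Fin n, E i j =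
      if i = j then 1
      else if (j : ℕ) = (i : ℕ) + 1 then -1
      else 0)
    (hT : ∀ i j : Fin n, T i j =
      if (i : ℕ) < (j : ℕ) then 0
      else if i = j then
        (if (i : ℕ) + 1 = n then k n * b n
         else k ((i : ℕ) + 1) * b ((i : ℕ) + 1) - k ((i : ℕ) + 2) * a ((i : ℕ) + 1))
      else
        (if (i : ℕ) + 1 = n then k n * a ((j : ℕ) + 1)
         else a ((j : ℕ) + 1) * (k ((i : ℕ) + 1) - k ((i : ℕ) + 2)))) :
    E * A₂ = T := by
  ext ⟨i, hi⟩ ⟨j, hj⟩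
  simp only [Matrix.mul_apply_of_upper_bidiagonal E A₂ hE, hA, hT, Fin.mk.injEq]
  split_ifs <;> first | omega | (subst_vars; ring)

/-- The upper bidiagonal matrix `E` (diagonal 1's, superdiagonal
`-1`'s) satisfies `E * A₂ = T`, where `T` is the stated lower triangular matrix. -/
theorem stmt_15 {F : Type*} [Field F] {n : ℕ} (hn : 2 ≤ n)
    (a b k : ℕ → F)
    (A₂ E T : Matrix (Fin n) (Fin n) F)
    (hA : ∀ i j : Fin n, A₂ i j =
      if (i : ℕ) ≤ (j : ℕ) then k ((j : ℕ) + 1) * b ((j : ℕ) + 1)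
      else k ((i : ℕ) + 1) * a ((j : ℕ) + 1))
    (hE : ∀ i j : Fin n, E i j =
      if i = j then 1
      else if (j : ℕ) = (i : ℕ) + 1 then -1
      else 0)
    (hT : ∀ i j : Fin n, T i j =
      if (i : ℕ) < (j : ℕ) then 0
      else if i = j then
        (if (i : ℕ) + 1 = n then k n * b n
         else k ((i : ℕ) + 1) * b ((i : ℕ) + 1) - k ((i : ℕ) + 2) * a ((i : ℕ) + 1))
      else
        (if (i : ℕ) + 1 = n then k n * a ((j : ℕ) + 1)
         else a ((j : ℕ) + 1) * (k ((i : ℕ) + 1) - k ((i : ℕ) + 2)))) :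
    E * A₂ = T :=
  stmt_15_general a b k A₂ E T hA hE hT
end

section
/- Assume g_i ≠ 0 for 2 ≤ i ≤ n−1. Let E_1 be the n×n matrix with 1's on the diagonal, entries −1 on the superdiagonal (positions (i, i+1), 1 ≤ i ≤ n−1), and zeros elsewhere; let E_2 be the n×n matrix with 1's on the diagonal, entries −g_i/g_{i−1} in positions (i, i−1) for 3 ≤ i ≤ n−1, entry −k_n/g_{n−1} in position (n, n−1), and zeros elsewhere. Then E_2 · E_1 · A_2 is the lower bidiagonal matrix with main diagonal (c_1, c_2, …, c_{n−1}, k_n c_n), subdiagonal entry (2,1) equal to a_1 g_2, subdiagonal entries (i+1, i) equal to g_{i+1} k_i f_i / g_i for 2 ≤ i ≤ n−2, subdiagonal entry (n, n−1) equal to k_n k_{n−1} f_{n−1}/g_{n−1}, and all other entries 0. -/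
/-!
Multiplying by `E₁` subtracts from each row of `A₂` the next one. Rows `i` and `i + 1` of `A₂`
agree to the right of column `i`, and left of the diagonal row `i` is `kᵢ (a₁, …, a_{i-1})`, so
`E₁ A₂` is lower triangular with diagonal `cᵢ` (and `kₙ cₙ` in the last row) and row `i` equal
to `gᵢ (a₁, …, a_{i-1})` below the diagonal, with `kₙ` in place of `gₙ`. Since these scales are
nonzero, `E₂` clears everything below the subdiagonal by subtracting `g_{i+1}/gᵢ` times row `i`
from row `i + 1`, and the subdiagonal becomes `g_{i+1} aᵢ - (g_{i+1}/gᵢ) cᵢ = g_{i+1} kᵢ fᵢ / gᵢ`.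
-/

namespace Matrix

variable {l m o R : Type*} [Fintype m] [NonUnitalNonAssocSemiring R]

theorem mul_apply_eq_add_of_row_eq_zero (E : Matrix l m R) (M : Matrix m o R) {i : l} {p q : m}
    (hpq : p ≠ q) (hE : ∀ x, x ≠ p → x ≠ q → E i x = 0) (j : o) :
    (E * M) i j = E i p * M p j + E i q * M q j :=
  Fintype.sum_eq_add p q hpq fun x hx => mul_eq_zero_of_left (hE x hx.1 hx.2) _

theorem mul_apply_eq_of_row_eq_zero (E : Matrix l m R) (M : Matrix m o R) {i : l} {p : m}
    (hE : ∀ x, x ≠ p → E i x = 0) (j : o) :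
    (E * M) i j = E i p * M p j :=
  Fintype.sum_eq_single p fun x hx => mul_eq_zero_of_left (hE x hx) _

end Matrix

open Matrix

section RowDifference

variable {R : Type*} {n : ℕ}

theorem E₁_mul_apply [Ring R] {E₁ : Matrix (Fin n) (Fin n) R}
    (hE1 : ∀ i j : Fin n, E₁ i j =
      if i = j then 1
      else if (j : ℕ) = (i : ℕ) + 1 then -1
      else 0)
    (M : Matrix (Fin n) (Fin n) R) (i j : Fin n) :
    (E₁ * M) i j = M i j - if h : (i : ℕ) + 1 < n then M ⟨i + 1, h⟩ j else 0 := by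
  by_cases h : (i : ℕ) + 1 < n
  · have hne : i ≠ ⟨i + 1, h⟩ := by simp [Fin.ext_iff]
    rw [mul_apply_eq_add_of_row_eq_zero _ _ hne, hE1, hE1, if_pos rfl, if_neg hne, if_pos rfl,
      dif_pos h, one_mul, neg_one_mul, sub_eq_add_neg]
    · intro x hx hx'
      rw [hE1, if_neg (Ne.symm hx), if_neg (fun e => hx' (Fin.ext e))]
  · rw [mul_apply_eq_of_row_eq_zero _ _ (p := i), hE1, if_pos rfl, one_mul, dif_neg h, sub_zero]
    intro x hx
    rw [hE1, if_neg (Ne.symm hx), if_neg (by omega)]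

/-- The scale of row `m` (counted from `1`) of `E₁ * A₂` below the diagonal. -/
def rowScale (g k : ℕ → R) (n m : ℕ) : R := if m = n then k n else g m

theorem rowScale_of_ne {g k : ℕ → R} {m : ℕ} (h : m ≠ n) : rowScale g k n m = g m :=
  if_neg h

def rowDiff [MulZeroClass R] (n : ℕ) (a c g k : ℕ → R) : Matrix (Fin n) (Fin n) R :=
  of fun i j =>
    if i = j then (if (i : ℕ) + 1 = n then k n * c n else c (i + 1))
    else if (j : ℕ) < i then rowScale g k n (i + 1) * a (j + 1) else 0

theorem E₁_mul_A₂ [CommRing R] {a b k c g : ℕ → R} {A₂ E₁ : Matrix (Fin n) (Fin n) R}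
    (hA : ∀ i j : Fin n, A₂ i j =
      if (i : ℕ) ≤ (j : ℕ) then k ((j : ℕ) + 1) * b ((j : ℕ) + 1)
      else k ((i : ℕ) + 1) * a ((j : ℕ) + 1))
    (hc : ∀ i : ℕ, 1 ≤ i → i ≤ n - 1 → c i = k i * b i - k (i + 1) * a i)
    (hcn : c n = b n)
    (hg : ∀ i : ℕ, 2 ≤ i → i ≤ n - 1 → g i = k i - k (i + 1))
    (hE1 : ∀ i j : Fin n, E₁ i j =
      if i = j then 1
      else if (j : ℕ) = (i : ℕ) + 1 then -1
      else 0) :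
    E₁ * A₂ = rowDiff n a c g k := by
  ext ⟨i, hi⟩ ⟨j, hj⟩
  rw [E₁_mul_apply hE1, rowDiff, of_apply, hA]
  simp only [Fin.mk.injEq]
  rcases lt_trichotomy i j with hij | rfl | hji
  · rw [if_pos hij.le, if_neg hij.ne, if_neg (not_lt.2 hij.le)]
    split_ifs
    · rw [hA, if_pos (show i + 1 ≤ j from hij), sub_self]
    · omega
  · rw [if_pos le_rfl, if_pos rfl]
    by_cases hlast : i + 1 = n
    · rw [dif_neg (by omega), if_pos hlast, hlast, hcn, sub_zero]
    · rw [dif_pos (by omega), hA, if_neg (show ¬i + 1 ≤ i by omega), if_neg hlast,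
        hc (i + 1) (by omega) (by omega)]
  · rw [if_neg (not_le.2 hji), if_neg hji.ne', if_pos hji, rowScale]
    by_cases hlast : i + 1 = n
    · rw [dif_neg (by omega), if_pos hlast, hlast, sub_zero]
    · rw [dif_pos (by omega), hA, if_neg (show ¬i + 1 ≤ j by omega), if_neg hlast,
        hg (i + 1) (by omega) (by omega)]
      ring

end RowDifference

theorem subdiagonal_entry_eq {F : Type*} [Field F] {i : ℕ} {a b c f g k : ℕ → F}
    (hc : c i = k i * b i - k (i + 1) * a i) (hf : f i = a i - b i)
    (hg : g i = k i - k (i + 1)) (hgi : g i ≠ 0) (r : F) :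
    r * a i - r / g i * c i = r * k i * f i / g i := by
  rw [hg] at hgi ⊢
  rw [hc, hf]
  field_simp
  ring

section E₂

variable {F : Type*} [Field F] {n : ℕ} {k g : ℕ → F} {E₂ : Matrix (Fin n) (Fin n) F}
    (hE2 : ∀ i j : Fin n, E₂ i j =
      if i = j then 1
      else if (i : ℕ) = (j : ℕ) + 1 ∧ 3 ≤ (i : ℕ) + 1 ∧ (i : ℕ) + 1 ≤ n - 1 then
        -(g ((i : ℕ) + 1) / g (i : ℕ))
      else if (i : ℕ) + 1 = n ∧ (j : ℕ) + 2 = n then -(k n / g (n - 1))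
      else 0)
include hE2

theorem E₂_mul_apply_of_lt_two (hn : 3 ≤ n) (M : Matrix (Fin n) (Fin n) F) {i : Fin n}
    (hi : (i : ℕ) < 2) (j : Fin n) : (E₂ * M) i j = M i j := by
  rw [mul_apply_eq_of_row_eq_zero _ _ (p := i), hE2, if_pos rfl, one_mul]
  intro x hx
  rw [hE2, if_neg (Ne.symm hx), if_neg (by omega), if_neg (by omega)]

theorem E₂_mul_apply_of_two_le (M : Matrix (Fin n) (Fin n) F) {i : Fin n}
    (hi : 2 ≤ (i : ℕ)) (j : Fin n) :
    (E₂ * M) i j =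
      M i j - rowScale g k n (i + 1) / rowScale g k n i * M ⟨i - 1, by omega⟩ j := by
  obtain ⟨i, hin⟩ := i
  simp only at hi ⊢
  have hne : (⟨i, hin⟩ : Fin n) ≠ ⟨i - 1, by omega⟩ := by simp only [ne_eq, Fin.mk.injEq]; omega
  have hsub : E₂ ⟨i, hin⟩ ⟨i - 1, by omega⟩ = -(rowScale g k n (i + 1) / rowScale g k n i) := by
    rw [hE2, if_neg hne, rowScale, rowScale, if_neg (show i ≠ n by omega)]
    simp only
    by_cases hlast : i + 1 = n
    · rw [if_neg (by omega), if_pos ⟨hlast, by omega⟩, if_pos hlast, ← hlast, Nat.add_sub_cancel]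
    · rw [if_pos ⟨by omega, by omega, by omega⟩, if_neg hlast]
  rw [mul_apply_eq_add_of_row_eq_zero _ _ hne, hE2, if_pos rfl, hsub]
  · ring
  · intro x hx hx'
    have : (x : ℕ) ≠ i - 1 := fun e => hx' (Fin.ext e)
    rw [hE2, if_neg (Ne.symm hx)]
    simp only
    rw [if_neg (by omega), if_neg (by omega)]

theorem E₂_mul_rowDiff (hn : 3 ≤ n) {a b c f : ℕ → F} {L : Matrix (Fin n) (Fin n) F}
    (hc : ∀ i : ℕ, 1 ≤ i → i ≤ n - 1 → c i = k i * b i - k (i + 1) * a i)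
    (hf : ∀ i : ℕ, 2 ≤ i → i ≤ n - 1 → f i = a i - b i)
    (hg : ∀ i : ℕ, 2 ≤ i → i ≤ n - 1 → g i = k i - k (i + 1))
    (hgne : ∀ i : ℕ, 2 ≤ i → i ≤ n - 1 → g i ≠ 0)
    (hL : ∀ i j : Fin n, L i j =
      if i = j then (if (i : ℕ) + 1 = n then k n * c n else c ((i : ℕ) + 1))
      else if (i : ℕ) = (j : ℕ) + 1 then
        (if (j : ℕ) = 0 then a 1 * g 2
         else if (i : ℕ) + 1 = n then k n * k (n - 1) * f (n - 1) / g (n - 1)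
         else g ((j : ℕ) + 2) * k ((j : ℕ) + 1) * f ((j : ℕ) + 1) / g ((j : ℕ) + 1))
      else 0) :
    E₂ * rowDiff n a c g k = L := by
  ext ⟨i, hi⟩ ⟨j, hj⟩
  by_cases hi2 : i < 2
  · rw [E₂_mul_apply_of_lt_two hE2 hn _ hi2, rowDiff, of_apply, hL]
    simp only [Fin.mk.injEq]
    rcases lt_trichotomy i j with hij | rfl | hji
    · simp (disch := omega) only [if_neg]
    · simp only [if_pos]
    · obtain ⟨rfl, rfl⟩ : i = 1 ∧ j = 0 := by omega
      simp (disch := omega) only [rowScale, if_pos, if_neg, ↓reduceIte]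
      rw [mul_comm]
  · have hgi : g i ≠ 0 := hgne i (by omega) (by omega)
    rw [E₂_mul_apply_of_two_le hE2 _ (show 2 ≤ i by omega), hL]
    simp only [rowDiff, of_apply, Fin.mk.injEq]
    rcases lt_trichotomy (j + 1) i with hji | rfl | hij
    · simp (disch := omega) only [rowScale_of_ne, if_pos, if_neg, Nat.sub_add_cancel]
      field_simp
      ring
    · have hsub := subdiagonal_entry_eq (hc (j + 1) (by omega) (by omega))
        (hf (j + 1) (by omega) (by omega)) (hg (j + 1) (by omega) (by omega)) hgi
      simp (disch := omega) only [rowScale, if_pos, if_neg, Nat.add_sub_cancel, ↓reduceIte, hsub]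
      split_ifs with hlast
      · subst hlast
        rfl
      · rfl
    · simp (disch := omega) only [if_neg, mul_zero, sub_zero]

end E₂

theorem stmt_16_general {F : Type*} [Field F] {n : ℕ} (hn : 3 ≤ n)
    (a b k c f g : ℕ → F)
    (A₂ E₁ E₂ L : Matrix (Fin n) (Fin n) F)
    (hA : ∀ i j : Fin n, A₂ i j =
      if (i : ℕ) ≤ (j : ℕ) then k ((j : ℕ) + 1) * b ((j : ℕ) + 1)
      else k ((i : ℕ) + 1) * a ((j : ℕ) + 1))
    (hc : ∀ i : ℕ, 1 ≤ i → i ≤ n - 1 → c i = k i * b i - k (i + 1) * a i)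
    (hcn : c n = b n)
    (hf : ∀ i : ℕ, 2 ≤ i → i ≤ n - 1 → f i = a i - b i)
    (hg : ∀ i : ℕ, 2 ≤ i → i ≤ n - 1 → g i = k i - k (i + 1))
    (hgne : ∀ i : ℕ, 2 ≤ i → i ≤ n - 1 → g i ≠ 0)
    (hE1 : ∀ i j : Fin n, E₁ i j =
      if i = j then 1
      else if (j : ℕ) = (i : ℕ) + 1 then -1
      else 0)
    (hE2 : ∀ i j : Fin n, E₂ i j =
      if i = j then 1
      else if (i : ℕ) = (j : ℕ) + 1 ∧ 3 ≤ (i : ℕ) + 1 ∧ (i : ℕ) + 1 ≤ n - 1 then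
        -(g ((i : ℕ) + 1) / g (i : ℕ))
      else if (i : ℕ) + 1 = n ∧ (j : ℕ) + 2 = n then -(k n / g (n - 1))
      else 0)
    (hL : ∀ i j : Fin n, L i j =
      if i = j then (if (i : ℕ) + 1 = n then k n * c n else c ((i : ℕ) + 1))
      else if (i : ℕ) = (j : ℕ) + 1 then
        (if (j : ℕ) = 0 then a 1 * g 2
         else if (i : ℕ) + 1 = n then k n * k (n - 1) * f (n - 1) / g (n - 1)
         else g ((j : ℕ) + 2) * k ((j : ℕ) + 1) * f ((j : ℕ) + 1) / g ((j : ℕ) + 1))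
      else 0) :
    E₂ * E₁ * A₂ = L := by
  rw [Matrix.mul_assoc, E₁_mul_A₂ hA hc hcn hg hE1]
  exact E₂_mul_rowDiff hE2 hn hc hf hg hgne hL

/-- With `gᵢ ≠ 0` for `2 ≤ i ≤ n-1`, the matrices `E₁` (unit
diagonal, superdiagonal `-1`'s) and `E₂` (unit diagonal, entries `-gᵢ/g_{i-1}`
at `(i,i-1)` for `3 ≤ i ≤ n-1` and `-kₙ/g_{n-1}` at `(n,n-1)`) satisfy
`E₂ * E₁ * A₂ = L`, the stated lower bidiagonal matrix with main diagonal
`(c₁,…,c_{n-1}, kₙcₙ)`. -/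
theorem stmt_16 {F : Type*} [Field F] {n : ℕ} (hn : 3 ≤ n)
    (a b k c f g : ℕ → F)
    (A₂ E₁ E₂ L : Matrix (Fin n) (Fin n) F)
    (hA : ∀ i j : Fin n, A₂ i j =
      if (i : ℕ) ≤ (j : ℕ) then k ((j : ℕ) + 1) * b ((j : ℕ) + 1)
      else k ((i : ℕ) + 1) * a ((j : ℕ) + 1))
    (hc0 : c 0 = 1)
    (hc : ∀ i : ℕ, 1 ≤ i → i ≤ n - 1 → c i = k i * b i - k (i + 1) * a i)
    (hcn : c n = b n)
    (hf : ∀ i : ℕ, 2 ≤ i → i ≤ n - 1 → f i = a i - b i)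
    (hg : ∀ i : ℕ, 2 ≤ i → i ≤ n - 1 → g i = k i - k (i + 1))
    (hgn : g n = 1)
    (hgne : ∀ i : ℕ, 2 ≤ i → i ≤ n - 1 → g i ≠ 0)
    (hE1 : ∀ i j : Fin n, E₁ i j =
      if i = j then 1
      else if (j : ℕ) = (i : ℕ) + 1 then -1
      else 0)
    (hE2 : ∀ i j : Fin n, E₂ i j =
      if i = j then 1
      else if (i : ℕ) = (j : ℕ) + 1 ∧ 3 ≤ (i : ℕ) + 1 ∧ (i : ℕ) + 1 ≤ n - 1 then
        -(g ((i : ℕ) + 1) / g (i : ℕ))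
      else if (i : ℕ) + 1 = n ∧ (j : ℕ) + 2 = n then -(k n / g (n - 1))
      else 0)
    (hL : ∀ i j : Fin n, L i j =
      if i = j then (if (i : ℕ) + 1 = n then k n * c n else c ((i : ℕ) + 1))
      else if (i : ℕ) = (j : ℕ) + 1 then
        (if (j : ℕ) = 0 then a 1 * g 2
         else if (i : ℕ) + 1 = n then k n * k (n - 1) * f (n - 1) / g (n - 1)
         else g ((j : ℕ) + 2) * k ((j : ℕ) + 1) * f ((j : ℕ) + 1) / g ((j : ℕ) + 1))
      else 0) :
    E₂ * E₁ * A₂ = L :=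
  stmt_16_general hn a b k c f g A₂ E₁ E₂ L hA hc hcn hf hg hgne hE1 hE2 hL
end
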